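/- arXiv:1610.00959 — 11 statements merged into one kernel-verified Lean document; each statement's English description precedes it below -/
import Mathlib

section
/- Let p be an odd prime and let α ∈ ℤ_p be a p-adic unit such that −α is not a square in ℚ_p. Let A = diag(α, 1) ∈ M₂(ℚ_p). If g ∈ GL(2,ℚ_p) satisfies g · A · gᵀ = det(g) · A, then there exists λ ∈ ℚ_pˣ such that λg has all entries in ℤ_p and det(λg) is a p-adic unit, i.e. λg ∈ GL(2,ℤ_p). (In other words, the stabilizer in PGL(2,ℚ_p) of the point v_α = (α,0,1) of the hyperbolic disc is contained in PGL(2,ℤ_p).) -/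
/-!
For odd `p`, a unit `α` with `-α` a non-square makes `α x² + y²` anisotropic modulo `p`: by
Hensel's lemma, `α + t² ≡ 0 (mod p)` with `t` a unit would lift to a square root of `-α`. Hence
`‖α x² + y²‖ = max ‖x‖ ‖y‖ ²`. The diagonal entries of `g A gᵀ = det g • A` then say that both rows
of `g` have maximal entry norm `‖det g‖ ^ (1/2)`, so dividing `g` by an entry of that norm gives a
matrix with integral entries and unit determinant.
-/

open Matrix

section Padic

variable {p : ℕ} [Fact p.Prime]

theorem PadicInt.norm_two_eq_one (hp : p ≠ 2) : ‖(2 : ℤ_[p])‖ = 1 := by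
  exact_mod_cast PadicInt.norm_natCast_eq_one_iff.mpr
    ((Nat.coprime_primes Fact.out Nat.prime_two).mpr hp)

theorem PadicInt.isSquare_neg_of_norm_sq_add_lt_one (hp : p ≠ 2) {a t : ℤ_[p]} (ht : ‖t‖ = 1)
    (h : ‖t ^ 2 + a‖ < 1) : IsSquare (-a) := by
  open Polynomial in
  set F : ℤ_[p][X] := X ^ 2 + C a
  have hnorm : ‖F.aeval t‖ < ‖F.derivative.aeval t‖ ^ 2 := by
    simpa [F, one_add_one_eq_two, norm_two_eq_one hp, ht] using h
  obtain ⟨z, hz, -⟩ := hensels_lemma hnorm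
  have hz : z ^ 2 + a = 0 := by simpa [F] using hz
  exact ⟨z, by linear_combination -hz⟩

theorem Padic.norm_coe_add_sq_eq_one (hp : p ≠ 2) {a : ℤ_[p]} (hns : ¬ IsSquare (-(a : ℚ_[p])))
    {t : ℚ_[p]} (ht : ‖t‖ = 1) : ‖(a : ℚ_[p]) + t ^ 2‖ = 1 := by
  obtain ⟨t, rfl⟩ : ∃ s : ℤ_[p], (s : ℚ_[p]) = t := ⟨⟨t, ht.le⟩, rfl⟩
  rw [← PadicInt.coe_pow, ← PadicInt.coe_add, PadicInt.padic_norm_e_of_padicInt, add_comm] at *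
  refine le_antisymm (PadicInt.norm_le_one _) (not_lt.mp fun hlt => hns ?_)
  exact_mod_cast (PadicInt.isSquare_neg_of_norm_sq_add_lt_one hp ht hlt).map PadicInt.Coe.ringHom

theorem Padic.norm_coe_mul_sq_add_sq (hp : p ≠ 2) {a : ℤ_[p]} (hu : IsUnit a)
    (hns : ¬ IsSquare (-(a : ℚ_[p]))) (x y : ℚ_[p]) :
    ‖(a : ℚ_[p]) * x ^ 2 + y ^ 2‖ = max ‖x‖ ‖y‖ ^ 2 := by
  rcases eq_or_ne ‖x‖ ‖y‖ with hxy | hxy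
  · rcases eq_or_ne x 0 with rfl | hx
    · simp_all
    · have ht : ‖y / x‖ = 1 := by rw [norm_div, hxy, div_self (hxy ▸ norm_ne_zero_iff.mpr hx)]
      calc ‖(a : ℚ_[p]) * x ^ 2 + y ^ 2‖ = ‖x‖ ^ 2 * ‖(a : ℚ_[p]) + (y / x) ^ 2‖ := by
            rw [← norm_pow, ← norm_mul]; congr 1; field_simp
        _ = max ‖x‖ ‖y‖ ^ 2 := by rw [norm_coe_add_sq_eq_one hp hns ht, ← hxy, max_self, mul_one]
  · have hau : ‖(a : ℚ_[p])‖ = 1 := by simpa [PadicInt.isUnit_iff] using hu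
    have hsq : ‖(a : ℚ_[p]) * x ^ 2‖ ≠ ‖y ^ 2‖ := by
      rwa [norm_mul, hau, one_mul, norm_pow, norm_pow, Ne,
        pow_left_inj₀ (norm_nonneg _) (norm_nonneg _) two_ne_zero]
    rw [add_eq_max_of_ne hsq, norm_mul, hau, one_mul, norm_pow, norm_pow,
      pow_left_monotoneOn.map_max (norm_nonneg x) (norm_nonneg y)]

end Padic

theorem Matrix.mul_fin_two_diag_mul_transpose_apply_self {R : Type*} [CommSemiring R] (a : R)
    (g : Matrix (Fin 2) (Fin 2) R) (i : Fin 2) :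
    (g * !![a, 0; 0, 1] * gᵀ) i i = a * g i 0 ^ 2 + g i 1 ^ 2 := by
  simp only [mul_apply, of_apply, cons_val', cons_val_fin_one, Fin.sum_univ_two, cons_val_zero,
    cons_val_one, transpose_apply, mul_zero, add_zero, mul_one, zero_add]
  ring

theorem Matrix.exists_smul_norm_entry_le_one_norm_det_eq_one {K : Type*} [NormedField K]
    (g : Matrix (Fin 2) (Fin 2) K) (hdet : g.det ≠ 0)
    (hrow : ∀ i, max ‖g i 0‖ ‖g i 1‖ ^ 2 = ‖g.det‖) :
    ∃ lam : K, lam ≠ 0 ∧ (∀ i j, ‖(lam • g) i j‖ ≤ 1) ∧ ‖(lam • g).det‖ = 1 := by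
  obtain ⟨m, hm⟩ : ∃ m : K, ‖m‖ = max ‖g 0 0‖ ‖g 0 1‖ :=
    (max_choice _ _).elim (fun h => ⟨g 0 0, h.symm⟩) (fun h => ⟨g 0 1, h.symm⟩)
  have hdet_m : ‖g.det‖ = ‖m‖ ^ 2 := by rw [hm, hrow]
  have hrow_m (i : Fin 2) : max ‖g i 0‖ ‖g i 1‖ = ‖m‖ :=
    (pow_left_inj₀ (le_max_of_le_left (norm_nonneg _)) (norm_nonneg m) two_ne_zero).mp
      (by rw [hrow, hdet_m])
  have hm0 : m ≠ 0 := by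
    rintro rfl
    exact hdet (norm_eq_zero.mp (by simpa using hdet_m))
  refine ⟨m⁻¹, inv_ne_zero hm0, fun i j => ?_, ?_⟩
  · rw [smul_apply, smul_eq_mul, norm_mul, norm_inv, inv_mul_le_one₀ (norm_pos_iff.mpr hm0),
      ← hrow_m i]
    fin_cases j
    exacts [le_max_left _ _, le_max_right _ _]
  · rw [det_smul, norm_mul, norm_pow, norm_inv, hdet_m, Fintype.card_fin]
    field_simp

theorem stmt_3 (p : ℕ) [Fact p.Prime] (hp : p ≠ 2)
    (α : ℤ_[p]) (hu : IsUnit α) (hns : ¬ IsSquare (-(α : ℚ_[p])))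
    (g : Matrix (Fin 2) (Fin 2) ℚ_[p]) (hg : IsUnit g.det)
    (hstab : g * !![(α : ℚ_[p]), 0; 0, 1] * gᵀ = g.det • !![(α : ℚ_[p]), 0; 0, 1]) :
    ∃ lam : ℚ_[p], lam ≠ 0 ∧ (∀ i j, ‖(lam • g) i j‖ ≤ 1) ∧ ‖(lam • g).det‖ = 1 := by
  refine g.exists_smul_norm_entry_le_one_norm_det_eq_one hg.ne_zero fun i => ?_
  have hii := congrFun (congrFun hstab i) i
  rw [mul_fin_two_diag_mul_transpose_apply_self, Matrix.smul_apply, smul_eq_mul] at hii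
  rw [← Padic.norm_coe_mul_sq_add_sq hp hu hns, hii, norm_mul]
  fin_cases i <;> simp [PadicInt.isUnit_iff.mp hu]
end

section
/- Let p be an odd prime and let α ∈ ℤ_p be a p-adic unit such that −α is not a square in ℚ_p. Let A = diag(α, 1) ∈ M₂(ℚ_p). Suppose h ∈ GL(2,ℚ_p) is such that for every g ∈ GL(2,ℚ_p) satisfying g · A · gᵀ = det(g) · A, the conjugate h g h⁻¹ belongs to ℚ_pˣ · GL(2,ℤ_p) (i.e. is a scalar multiple of a matrix in GL(2,ℤ_p)). Then h itself belongs to ℚ_pˣ · GL(2,ℤ_p). (In other words, PGL(2,ℤ_p) is the unique maximal compact subgroup of PGL(2,ℚ_p) containing the stabilizer of v_α = (α,0,1).) -/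
/-!
The matrix `J = !![0, α; -1, 0]` fixes `v_α`, so by hypothesis `h J h⁻¹` is, up to a scalar, in
`GL(2, ℤ_p)`; comparing determinants shows the scalar is a unit, so `h J h⁻¹` is integral. Scale `h`
to a primitive integral matrix `H`; then `H J = K H` with `K` integral. If `det H` were divisible
by `p`, the reduction `H̄` would be a nonzero singular matrix whose kernel is stable under `J̄`,
i.e. `J̄` would have an eigenvector over `𝔽_p`. Its characteristic polynomial is `X² + ᾱ`, so `-ᾱ`
would be a square mod `p`, and by Hensel's lemma `-α` would be a square in `ℤ_p`.
-/

open Matrix Polynomial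

namespace Matrix

theorem isSquare_neg_of_mul_eq_mul {F : Type*} [Field F] {H K : Matrix (Fin 2) (Fin 2) F} {w : F}
    (hH : H ≠ 0) (hdet : H.det = 0) (hHK : H * !![0, w; -1, 0] = K * H) : IsSquare (-w) := by
  obtain ⟨v, hv0, hv⟩ := exists_mulVec_eq_zero_iff.2 hdet
  have hJv : H *ᵥ (!![0, w; -1, 0] *ᵥ v) = 0 := by
    rw [mulVec_mulVec, hHK, ← mulVec_mulVec, hv, mulVec_zero]
  -- `v` and `J v` both lie in the kernel of `H ≠ 0`, so they are dependent.
  have hiso : v 0 ^ 2 + w * v 1 ^ 2 = 0 := by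
    by_contra hne
    refine hH (Matrix.ext fun i j => ?_)
    have e₁ := congrFun hv i
    have e₂ := congrFun hJv i
    simp only [mulVec, dotProduct, Fin.sum_univ_two, Pi.zero_apply, of_apply, cons_val',
      cons_val_zero, cons_val_one, empty_val', cons_val_fin_one] at e₁ e₂
    fin_cases j
    · exact (mul_eq_zero.1 (by linear_combination v 0 * e₁ + v 1 * e₂ :
        H i 0 * (v 0 ^ 2 + w * v 1 ^ 2) = 0)).resolve_right hne
    · exact (mul_eq_zero.1 (by linear_combination w * v 1 * e₁ - v 0 * e₂ :
        H i 1 * (v 0 ^ 2 + w * v 1 ^ 2) = 0)).resolve_right hne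
  have hv1 : v 1 ≠ 0 := by
    intro hv1
    refine hv0 (funext fun i => ?_)
    fin_cases i
    · simpa [hv1] using hiso
    · exact hv1
  refine ⟨v 0 / v 1, ?_⟩
  rw [div_mul_div_comm, eq_div_iff (mul_ne_zero hv1 hv1)]
  linear_combination -hiso

theorem exists_smul_norm_le_one_and_norm_eq_one {K : Type*} [NormedField K] {m n : Type*}
    [Finite m] [Finite n] {X : Matrix m n K} (hX : X ≠ 0) :
    ∃ d : K, d ≠ 0 ∧ (∀ i j, ‖(d • X) i j‖ ≤ 1) ∧ ∃ i j, ‖(d • X) i j‖ = 1 := by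
  obtain ⟨i, j, hij⟩ : ∃ i j, X i j ≠ 0 := by
    by_contra! h
    exact hX (Matrix.ext h)
  have : Nonempty (m × n) := ⟨(i, j)⟩
  obtain ⟨⟨i₀, j₀⟩, hmax⟩ := Finite.exists_max fun ij : m × n => ‖X ij.1 ij.2‖
  have hpos : 0 < ‖X i₀ j₀‖ := (norm_pos_iff.2 hij).trans_le (hmax (i, j))
  refine ⟨(X i₀ j₀)⁻¹, inv_ne_zero (norm_pos_iff.1 hpos), fun i j => ?_, i₀, j₀, ?_⟩
  · rw [smul_apply, smul_eq_mul, norm_mul, norm_inv, inv_mul_le_one₀ hpos]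
    exact hmax (i, j)
  · rw [smul_apply, smul_eq_mul, inv_mul_cancel₀ (norm_pos_iff.1 hpos), norm_one]

theorem norm_apply_le_one_of_norm_det_smul_eq_one {K : Type*} [NormedField K] {n : Type*}
    [Fintype n] [DecidableEq n] {X : Matrix n n K} {c : K} (hX : ‖X.det‖ = 1)
    (hcX : ∀ i j, ‖(c • X) i j‖ ≤ 1) (hdet : ‖(c • X).det‖ = 1) (i j : n) : ‖X i j‖ ≤ 1 := by
  rw [det_smul, norm_mul, norm_pow, hX, mul_one] at hdet
  have : Nonempty n := ⟨i⟩
  have hc : ‖c‖ = 1 := (pow_eq_one_iff_of_nonneg (norm_nonneg c) Fintype.card_ne_zero).1 hdet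
  simpa [hc] using hcX i j

end Matrix

namespace PadicInt

variable {p : ℕ} [Fact p.Prime]

theorem toZMod_eq_zero_iff {x : ℤ_[p]} : toZMod x = 0 ↔ ¬IsUnit x := by
  rw [← RingHom.mem_ker, ker_toZMod, IsLocalRing.mem_maximalIdeal, mem_nonunits_iff]

theorem isSquare_of_isSquare_toZMod (hp : p ≠ 2) {a : ℤ_[p]} (ha : IsUnit a)
    (h : IsSquare (toZMod a)) : IsSquare a := by
  obtain ⟨t, ht⟩ := h
  obtain ⟨b, rfl⟩ := ZMod.ringHom_surjective toZMod t
  have hb : IsUnit b := by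
    by_contra hb
    exact toZMod_eq_zero_iff.1 (by rw [ht, toZMod_eq_zero_iff.2 hb, mul_zero]) ha
  have h2 : IsUnit (2 : ℤ_[p]) := by
    by_contra h2
    have := toZMod_eq_zero_iff.2 h2
    rw [map_ofNat] at this
    exact Ring.two_ne_zero (by rwa [ZMod.ringChar_zmod_n]) this
  have hder : (derivative (X ^ 2 - C a)).aeval b = 2 * b := by simp [one_add_one_eq_two]
  have hroot : ‖(X ^ 2 - C a).aeval b‖ < ‖(derivative (X ^ 2 - C a)).aeval b‖ ^ 2 := by
    have hval : toZMod ((X ^ 2 - C a).aeval b) = 0 := by simp [ht, sq]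
    rw [hder, isUnit_iff.1 (h2.mul hb), one_pow]
    exact not_isUnit_iff.1 (toZMod_eq_zero_iff.1 hval)
  obtain ⟨z, hz, -⟩ := hensels_lemma hroot
  exact ⟨z, by simpa [sub_eq_zero, sq, eq_comm] using hz⟩

theorem exists_map_algebraMap_eq_of_norm_le_one {m n : Type*} {X : Matrix m n ℚ_[p]}
    (hX : ∀ i j, ‖X i j‖ ≤ 1) : ∃ Y : Matrix m n ℤ_[p], Y.map (algebraMap ℤ_[p] ℚ_[p]) = X :=
  ⟨.of fun i j => ⟨X i j, hX i j⟩, rfl⟩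

theorem isUnit_det_of_mul_eq_mul (hp : p ≠ 2) {α : ℤ_[p]} (hα : IsUnit α) (hns : ¬IsSquare (-α))
    {H K : Matrix (Fin 2) (Fin 2) ℤ_[p]} (hprim : ∃ i j, IsUnit (H i j))
    (hHK : H * !![0, α; -1, 0] = K * H) : IsUnit H.det := by
  by_contra hdet
  obtain ⟨i, j, hij⟩ := hprim
  refine hns (isSquare_of_isSquare_toZMod hp hα.neg ?_)
  rw [map_neg]
  refine Matrix.isSquare_neg_of_mul_eq_mul (H := H.map toZMod) (K := K.map toZMod) ?_ ?_ ?_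
  · intro h0
    exact toZMod_eq_zero_iff.1 (congr_fun₂ h0 i j) hij
  · rw [← RingHom.mapMatrix_apply, ← RingHom.map_det, toZMod_eq_zero_iff.2 hdet]
  · have hJ : (!![0, α; -1, 0] : Matrix (Fin 2) (Fin 2) ℤ_[p]).map toZMod =
        !![0, toZMod α; -1, 0] := by
      ext i j; fin_cases i <;> fin_cases j <;> simp
    rw [← hJ, ← Matrix.map_mul, hHK, Matrix.map_mul]

theorem norm_det_eq_one_of_mul_eq_mul (hp : p ≠ 2) {α : ℤ_[p]} (hα : IsUnit α)
    (hns : ¬IsSquare (-(α : ℚ_[p]))) {X M : Matrix (Fin 2) (Fin 2) ℚ_[p]}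
    (hX : ∀ i j, ‖X i j‖ ≤ 1) (hXprim : ∃ i j, ‖X i j‖ = 1) (hM : ∀ i j, ‖M i j‖ ≤ 1)
    (hXM : X * !![0, (α : ℚ_[p]); -1, 0] = M * X) : ‖X.det‖ = 1 := by
  obtain ⟨H, rfl⟩ := exists_map_algebraMap_eq_of_norm_le_one hX
  obtain ⟨K, rfl⟩ := exists_map_algebraMap_eq_of_norm_le_one hM
  obtain ⟨i, j, hij⟩ := hXprim
  have hJ : (!![0, α; -1, 0] : Matrix (Fin 2) (Fin 2) ℤ_[p]).map (algebraMap ℤ_[p] ℚ_[p]) =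
      !![0, (α : ℚ_[p]); -1, 0] := by
    ext i j; fin_cases i <;> fin_cases j <;> simp [algebraMap_apply]
  have hHK : H * !![0, α; -1, 0] = K * H :=
    map_injective (FaithfulSMul.algebraMap_injective ℤ_[p] ℚ_[p]) (by simpa [Matrix.map_mul, hJ])
  have hns' : ¬IsSquare (-α) := fun hsq =>
    hns (by simpa [algebraMap_apply] using hsq.map (algebraMap ℤ_[p] ℚ_[p]))
  have hHprim : IsUnit (H i j) := by simpa [isUnit_iff, algebraMap_apply] using hij
  rw [← RingHom.mapMatrix_apply, ← RingHom.map_det, algebraMap_apply, padic_norm_e_of_padicInt,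
    ← isUnit_iff]
  exact isUnit_det_of_mul_eq_mul hp hα hns' ⟨i, j, hHprim⟩ hHK

end PadicInt

theorem stmt_4 (p : ℕ) [Fact p.Prime] (hp : p ≠ 2)
    (α : ℤ_[p]) (hu : IsUnit α) (hns : ¬ IsSquare (-(α : ℚ_[p])))
    (h : Matrix (Fin 2) (Fin 2) ℚ_[p]) (hh : IsUnit h.det)
    (hconj : ∀ g : Matrix (Fin 2) (Fin 2) ℚ_[p], IsUnit g.det →
      g * !![(α : ℚ_[p]), 0; 0, 1] * gᵀ = g.det • !![(α : ℚ_[p]), 0; 0, 1] →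
      ∃ c : ℚ_[p], c ≠ 0 ∧ (∀ i j, ‖(c • (h * g * h⁻¹)) i j‖ ≤ 1) ∧
        ‖(c • (h * g * h⁻¹)).det‖ = 1) :
    ∃ c : ℚ_[p], c ≠ 0 ∧ (∀ i j, ‖(c • h) i j‖ ≤ 1) ∧ ‖(c • h).det‖ = 1 := by
  set J : Matrix (Fin 2) (Fin 2) ℚ_[p] := !![0, (α : ℚ_[p]); -1, 0]
  have hJdet : J.det = α := by simp [J, det_fin_two]
  have hJfix : J * !![(α : ℚ_[p]), 0; 0, 1] * Jᵀ = J.det • !![(α : ℚ_[p]), 0; 0, 1] := by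
    rw [hJdet]
    ext i j
    fin_cases i <;> fin_cases j <;> simp [J, mul_apply]
  obtain ⟨c, -, hcint, hcdet⟩ :=
    hconj J (by simpa [hJdet] using hu.map (algebraMap ℤ_[p] ℚ_[p])) hJfix
  have hM := norm_apply_le_one_of_norm_det_smul_eq_one
    (by rw [det_conj ((isUnit_iff_isUnit_det h).2 hh), hJdet, PadicInt.padic_norm_e_of_padicInt,
      ← PadicInt.isUnit_iff]; exact hu) hcint hcdet
  obtain ⟨d, hd, hdint, hdprim⟩ :=
    exists_smul_norm_le_one_and_norm_eq_one (X := h) fun h0 => by simp [h0] at hh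
  refine ⟨d, hd, hdint, PadicInt.norm_det_eq_one_of_mul_eq_mul hp hu hns hdint hdprim hM ?_⟩
  simp only [J, Matrix.smul_mul, Matrix.mul_smul, Matrix.mul_assoc, nonsing_inv_mul h hh,
    Matrix.mul_one]
end

section
/- Let k be a field of characteristic different from 2 and let α ∈ kˣ be such that −α is a square in k. Then the conjugation action of SL(2,k) on the set {X ∈ M₂(k) : tr(X) = 0 and det(X) = α} is transitive: any two trace-zero 2×2 matrices over k of determinant α are conjugate by a matrix of determinant 1. (This is the statement that the level set {Q = α} is a one-sheeted hyperboloid: SO(Q)·v_α = Ad(PSL(2,k))·v_α when −1 lies in the square class of α.) -/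
open Matrix

private theorem conj_diag' {k : Type*} [Field k] (h2 : (2:k) ≠ 0) (s : k) (hs : s ≠ 0)
    (X : Matrix (Fin 2) (Fin 2) k) (htr : X.trace = 0) (hdet : X.det = -(s*s)) :
    ∃ g : Matrix (Fin 2) (Fin 2) k, IsUnit g.det ∧ X * g = g * !![s, 0; 0, -s] := by
  obtain ⟨a, ha⟩ : ∃ a, X 0 0 = a := ⟨_, rfl⟩
  obtain ⟨b, hb⟩ : ∃ b, X 0 1 = b := ⟨_, rfl⟩
  obtain ⟨c, hc⟩ : ∃ c, X 1 0 = c := ⟨_, rfl⟩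
  have ha11 : X 1 1 = -a := by
    have h := htr; rw [Matrix.trace_fin_two, ha] at h; linear_combination h
  have hX : X = !![a, b; c, -a] := by
    ext i j; fin_cases i <;> fin_cases j <;> simp [ha, hb, hc, ha11]
  have hkey : a * a + b * c = s * s := by
    have h := hdet
    rw [Matrix.det_fin_two, ha11, ha, hb, hc] at h
    linear_combination -h
  by_cases hb0 : b ≠ 0
  · refine ⟨!![b, b; s - a, -s - a], ?_, ?_⟩
    · have hd : (!![b, b; s - a, -s - a]).det = -(2 * b * s) := by
        rw [Matrix.det_fin_two_of]; ring
      rw [hd]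
      exact isUnit_iff_ne_zero.2 (neg_ne_zero.2 (mul_ne_zero (mul_ne_zero h2 hb0) hs))
    · rw [hX]
      ext i j; fin_cases i <;> fin_cases j <;>
        simp [Matrix.mul_apply, Fin.sum_univ_two] <;>
        first | ring1 | linear_combination hkey
  · push_neg at hb0
    by_cases hc0 : c ≠ 0
    · refine ⟨!![s + a, a - s; c, c], ?_, ?_⟩
      · have hd : (!![s + a, a - s; c, c]).det = 2 * c * s := by
          rw [Matrix.det_fin_two_of]; ring
        rw [hd]
        exact isUnit_iff_ne_zero.2 (mul_ne_zero (mul_ne_zero h2 hc0) hs)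
      · rw [hX]
        ext i j; fin_cases i <;> fin_cases j <;>
          simp [Matrix.mul_apply, Fin.sum_univ_two] <;>
          first | ring1 | linear_combination hkey
    · push_neg at hc0
      rw [hb0, hc0] at hkey
      have hfac : (a - s) * (a + s) = 0 := by linear_combination hkey
      rcases mul_eq_zero.1 hfac with h | h
      · have has : a = s := by linear_combination h
        refine ⟨1, by simp, ?_⟩
        rw [hX, hb0, hc0, has]
        ext i j; fin_cases i <;> fin_cases j <;>
          simp [Matrix.mul_apply, Fin.sum_univ_two]
      · have has : a = -s := by linear_combination h
        refine ⟨!![0, 1; -1, 0], by simp [Matrix.det_fin_two_of], ?_⟩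
        rw [hX, hb0, hc0, has]
        ext i j; fin_cases i <;> fin_cases j <;>
          simp [Matrix.mul_apply, Fin.sum_univ_two]

theorem stmt_5 {k : Type*} [Field k] (hchar : ringChar k ≠ 2)
    (α : k) (hα : α ≠ 0) (hsq : IsSquare (-α))
    (X Y : Matrix (Fin 2) (Fin 2) k)
    (hXtr : X.trace = 0) (hXdet : X.det = α)
    (hYtr : Y.trace = 0) (hYdet : Y.det = α) :
    ∃ g : Matrix (Fin 2) (Fin 2) k, g.det = 1 ∧ Y = g * X * g⁻¹ := by
  have h2 : (2:k) ≠ 0 := Ring.two_ne_zero hchar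
  obtain ⟨r, hr⟩ := hsq
  have hr0 : r ≠ 0 := by
    rintro rfl; rw [mul_zero] at hr; exact hα (neg_eq_zero.mp hr)
  have hXd : X.det = -(r*r) := by rw [hXdet]; linear_combination -hr
  have hYd : Y.det = -(r*r) := by rw [hYdet]; linear_combination -hr
  obtain ⟨g, hgu, hgc⟩ := conj_diag' h2 r hr0 X hXtr hXd
  obtain ⟨h, hhu, hhc⟩ := conj_diag' h2 r hr0 Y hYtr hYd
  have norm : ∀ (Z M : Matrix (Fin 2) (Fin 2) k), IsUnit M.det →
      Z * M = M * !![r,0;0,-r] → ∃ M' : Matrix (Fin 2) (Fin 2) k,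
      M'.det = 1 ∧ Z * M' = M' * !![r,0;0,-r] := by
    intro Z M hM hZM
    have hMne : M.det ≠ 0 := hM.ne_zero
    refine ⟨M * Matrix.diagonal ![1, M.det⁻¹], ?_, ?_⟩
    · rw [Matrix.det_mul, Matrix.det_diagonal, Fin.prod_univ_two]
      simp only [Matrix.cons_val_zero, Matrix.cons_val_one, Matrix.head_cons, one_mul]
      field_simp
    · have hdiag : !![r,0;0,-r] = Matrix.diagonal ![r,-r] := by
        ext i j; fin_cases i <;> fin_cases j <;> simp [Matrix.diagonal]
      rw [← Matrix.mul_assoc, hZM, Matrix.mul_assoc, Matrix.mul_assoc, hdiag,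
        Matrix.diagonal_mul_diagonal, Matrix.diagonal_mul_diagonal]
      congr 1
      ext i; fin_cases i <;> simp [mul_comm]
  obtain ⟨g', hg1, hgc'⟩ := norm X g hgu hgc
  obtain ⟨h', hh1, hhc'⟩ := norm Y h hhu hhc
  have hgu' : IsUnit g'.det := by rw [hg1]; exact isUnit_one
  have hhu' : IsUnit h'.det := by rw [hh1]; exact isUnit_one
  refine ⟨h' * g'⁻¹, ?_, ?_⟩
  · rw [Matrix.det_mul, Matrix.det_nonsing_inv, hg1, hh1]; simp
  · have hinv : (h' * g'⁻¹)⁻¹ = g' * h'⁻¹ := by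
      rw [Matrix.mul_inv_rev, Matrix.nonsing_inv_nonsing_inv _ hgu']
    rw [hinv]
    have hXg : g'⁻¹ * X = !![r,0;0,-r] * g'⁻¹ := by
      calc g'⁻¹ * X = g'⁻¹ * X * (g' * g'⁻¹) := by
            rw [Matrix.mul_nonsing_inv _ hgu', mul_one]
        _ = g'⁻¹ * (X * g') * g'⁻¹ := by
            simp only [Matrix.mul_assoc]
        _ = g'⁻¹ * (g' * !![r,0;0,-r]) * g'⁻¹ := by rw [hgc']
        _ = !![r,0;0,-r] * g'⁻¹ := by
            rw [← Matrix.mul_assoc, Matrix.nonsing_inv_mul _ hgu', one_mul]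
    calc Y = Y * h' * h'⁻¹ := by rw [Matrix.mul_assoc, Matrix.mul_nonsing_inv _ hhu', mul_one]
      _ = h' * !![r,0;0,-r] * h'⁻¹ := by rw [hhc']
      _ = h' * (!![r,0;0,-r] * g'⁻¹ * g') * h'⁻¹ := by
          rw [Matrix.mul_assoc (!![r,0;0,-r]), Matrix.nonsing_inv_mul _ hgu', mul_one]
      _ = h' * (g'⁻¹ * X * g') * h'⁻¹ := by rw [hXg]
      _ = h' * g'⁻¹ * X * (g' * h'⁻¹) := by simp only [Matrix.mul_assoc]
end

section
/- Let k be a field of characteristic different from 2 and n ≥ 2 an integer such that for every nonzero vector (x₁,…,x_{n−1}) ∈ k^{n−1}, the element x₁² + … + x_{n−1}² is a nonzero square in k. Let Q(x₀,…,x_n) = x₀x_n − x₁² − … − x_{n−1}² on k^{n+1}. Then for every nonzero v = (v₀,…,v_n) ∈ k^{n+1} with Q(v) = 0 there exists α ∈ kˣ such that v₀ and v_n each lie in α·(kˣ)² ∪ {0}; moreover α is unique up to multiplication by a nonzero square: if α' ∈ kˣ also has this property then α/α' ∈ (kˣ)². (Hence the punctured isotropic cone is the disjoint union of the semi-cones C_ᾱ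 indexed by the square classes ᾱ ∈ kˣ/(kˣ)².) -/
/-! On an isotropic vector, `v₀ vₙ = ∑ wᵢ²`, and the hypothesis makes this sum a square which
vanishes only for `w = 0`. Hence `v₀` and `vₙ` are not both zero, and when one of them, say `v₀`,
is nonzero, `vₙ = v₀ (c / v₀)²` lies in the square class of `v₀`. That nonzero coordinate also pins
down the class, which gives uniqueness. -/

section SumOfSquares

variable {k ι : Type*} [Field k] [Fintype ι]

theorem exists_sum_sq_eq_sq
    (hsq : ∀ w : ι → k, w ≠ 0 → ∃ c : k, c ≠ 0 ∧ (∑ i, w i ^ 2) = c ^ 2) (w : ι → k) :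
    ∃ c : k, (∑ i, w i ^ 2) = c ^ 2 := by
  by_cases hw : w = 0
  · exact ⟨0, by simp [hw]⟩
  · obtain ⟨c, -, hc⟩ := hsq w hw
    exact ⟨c, hc⟩

theorem eq_zero_of_sum_sq_eq_zero
    (hsq : ∀ w : ι → k, w ≠ 0 → ∃ c : k, c ≠ 0 ∧ (∑ i, w i ^ 2) = c ^ 2) {w : ι → k}
    (h : (∑ i, w i ^ 2) = 0) : w = 0 := by
  by_contra hw
  obtain ⟨c, hc, hsum⟩ := hsq w hw
  exact pow_ne_zero 2 hc (hsum ▸ h)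

end SumOfSquares

section SquareClass

variable {k : Type*} [Field k]

/-- `x ∈ α (kˣ)² ∪ {0}`. -/
def IsSqMul (α x : k) : Prop := x = 0 ∨ ∃ c : k, c ≠ 0 ∧ x = α * c ^ 2

theorem isSqMul_self (a : k) : IsSqMul a a :=
  Or.inr ⟨1, one_ne_zero, by ring⟩

theorem isSqMul_of_mul_eq_sq {a b c : k} (ha : a ≠ 0) (h : a * b = c ^ 2) : IsSqMul a b := by
  by_cases hb : b = 0
  · exact Or.inl hb
  · have hc : c ≠ 0 := by
      rintro rfl
      exact mul_ne_zero ha hb (by simpa using h)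
    refine Or.inr ⟨c / a, div_ne_zero hc ha, ?_⟩
    field_simp
    linear_combination h

end SquareClass

theorem stmt_7_general {k : Type*} [Field k]
    (n : ℕ)
    (hsq : ∀ w : Fin (n - 1) → k, w ≠ 0 → ∃ c : k, c ≠ 0 ∧ (∑ i, w i ^ 2) = c ^ 2)
    (v0 vn : k) (w : Fin (n - 1) → k)
    (hne : ¬ (v0 = 0 ∧ vn = 0 ∧ w = 0))
    (hQ : v0 * vn - ∑ i, w i ^ 2 = 0) :
    ∃ α : k, α ≠ 0 ∧
      (v0 = 0 ∨ ∃ c : k, c ≠ 0 ∧ v0 = α * c ^ 2) ∧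
      (vn = 0 ∨ ∃ c : k, c ≠ 0 ∧ vn = α * c ^ 2) ∧
      ∀ α' : k, α' ≠ 0 →
        (v0 = 0 ∨ ∃ c : k, c ≠ 0 ∧ v0 = α' * c ^ 2) →
        (vn = 0 ∨ ∃ c : k, c ≠ 0 ∧ vn = α' * c ^ 2) →
        ∃ c : k, c ≠ 0 ∧ α = α' * c ^ 2 := by
  have hprod : v0 * vn = ∑ i, w i ^ 2 := sub_eq_zero.mp hQ
  obtain ⟨c, hc⟩ := exists_sum_sq_eq_sq hsq w
  have hv : v0 ≠ 0 ∨ vn ≠ 0 := by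
    by_contra! h
    refine hne ⟨h.1, h.2, eq_zero_of_sum_sq_eq_zero hsq ?_⟩
    rw [← hprod, h.1, zero_mul]
  rcases hv with h0 | hn0
  · exact ⟨v0, h0, isSqMul_self v0, isSqMul_of_mul_eq_sq h0 (hprod.trans hc),
      fun _ _ h _ => h.resolve_left h0⟩
  · exact ⟨vn, hn0, isSqMul_of_mul_eq_sq hn0 (by rw [mul_comm, hprod, hc]), isSqMul_self vn,
      fun _ _ _ h => h.resolve_left hn0⟩

theorem stmt_7 {k : Type*} [Field k] (hchar : ringChar k ≠ 2)
    (n : ℕ) (hn : 2 ≤ n)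
    (hsq : ∀ w : Fin (n - 1) → k, w ≠ 0 → ∃ c : k, c ≠ 0 ∧ (∑ i, w i ^ 2) = c ^ 2)
    (v0 vn : k) (w : Fin (n - 1) → k)
    (hne : ¬ (v0 = 0 ∧ vn = 0 ∧ w = 0))
    (hQ : v0 * vn - ∑ i, w i ^ 2 = 0) :
    ∃ α : k, α ≠ 0 ∧
      (v0 = 0 ∨ ∃ c : k, c ≠ 0 ∧ v0 = α * c ^ 2) ∧
      (vn = 0 ∨ ∃ c : k, c ≠ 0 ∧ vn = α * c ^ 2) ∧
      ∀ α' : k, α' ≠ 0 →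
        (v0 = 0 ∨ ∃ c : k, c ≠ 0 ∧ v0 = α' * c ^ 2) →
        (vn = 0 ∨ ∃ c : k, c ≠ 0 ∧ vn = α' * c ^ 2) →
        ∃ c : k, c ≠ 0 ∧ α = α' * c ^ 2 :=
  stmt_7_general n hsq v0 vn w hne hQ
end

section
/- Let k be a field of characteristic different from 2, let Q(x,y,z) = xz − y² with polar form B((x,y,z),(x',y',z')) = xz' + zx' − 2yy', let α ∈ kˣ, and let v ∈ k³ satisfy Q(v) = α. Then the set of values of Q on the nonzero vectors of the orthogonal plane of v is exactly the set of negatives of the nonzero-vector values of the binary form αx² + y²: {Q(w) : w ∈ k³, w ≠ 0, B(v,w) = 0} = {−(αx² + y²) : (x,y) ∈ k², (x,y) ≠ (0,0)}. (That is, Q restricted to v^⊥ is equivalent to −αx² − y² and takes values exactly in −K_α.) -/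
/-!
Write `v = (a, b, c)`, so `α = ac - b²`. If `a ≠ 0`, the map
`(x, y) ↦ (a x, y + b x, (2b (y + b x) - c a x) / a)` is a linear isomorphism of `k²` onto `v^⊥`
pulling `Q` back to `-(α x² + y²)`. If `a = 0`, then `α = -b²` forces `b ≠ 0`, and with
`s = c / 2b` the plane `v^⊥` is `{w | w₂ = s w₁}`, on which `Q w = w₁ (w₃ - s² w₁)` is hyperbolic;
putting `w₁ = b x - y` and `w₃ - s² w₁ = b x + y` turns it into `b² x² - y² = -(α x² + y²)`.
-/

namespace OrthogonalPlane

variable {k : Type*} [Field k]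

def quadForm (w : k × k × k) : k := w.1 * w.2.2 - w.2.1 ^ 2

def polarForm (v w : k × k × k) : k := v.1 * w.2.2 + v.2.2 * w.1 - 2 * v.2.1 * w.2.1

theorem setOf_values_eq_of_parametrization {A B W R : Type*} [Zero A] [Zero B] [Zero W]
    {S : Set W} {Q : W → R} {f : A → B → R} (φ : A → B → W) (hmem : ∀ x y, φ x y ∈ S)
    (hsurj : ∀ w ∈ S, ∃ x y, φ x y = w) (hzero : ∀ x y, φ x y = 0 → (x, y) = (0, 0))
    (hφ0 : φ 0 0 = 0) (hQ : ∀ x y, Q (φ x y) = f x y) :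
    {q | ∃ w, w ≠ 0 ∧ w ∈ S ∧ q = Q w} = {q | ∃ x y, (x, y) ≠ (0, 0) ∧ q = f x y} := by
  ext q
  constructor
  · rintro ⟨w, hw0, hwS, rfl⟩
    obtain ⟨x, y, rfl⟩ := hsurj w hwS
    refine ⟨x, y, ?_, hQ x y⟩
    rintro ⟨⟩
    exact hw0 hφ0
  · rintro ⟨x, y, hxy, rfl⟩
    exact ⟨φ x y, mt (hzero x y) hxy, hmem x y, (hQ x y).symm⟩

theorem orthogonal_values_of_fst_ne_zero {v : k × k × k} (hv : v.1 ≠ 0) :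
    {q | ∃ w, w ≠ 0 ∧ w ∈ {w | polarForm v w = 0} ∧ q = quadForm w} =
      {q | ∃ x y, (x, y) ≠ (0, 0) ∧ q = -(quadForm v * x ^ 2 + y ^ 2)} := by
  obtain ⟨a, b, c⟩ := v
  change a ≠ 0 at hv
  refine setOf_values_eq_of_parametrization
    (fun x y => (a * x, y + b * x, (2 * b * (y + b * x) - c * a * x) / a)) ?_ ?_ ?_ ?_ ?_
  · intro x y
    simp only [Set.mem_ofPred_eq, polarForm]
    field_simp
    ring
  · rintro ⟨w₁, w₂, w₃⟩ hw
    simp only [Set.mem_ofPred_eq, polarForm] at hw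
    obtain ⟨x, rfl⟩ : ∃ x, a * x = w₁ := ⟨w₁ / a, mul_div_cancel₀ w₁ hv⟩
    refine ⟨x, w₂ - b * x, ?_⟩
    simp only [Prod.mk.injEq, sub_add_cancel, true_and]
    rw [div_eq_iff hv]
    linear_combination -hw
  · intro x y h
    simp only [Prod.mk_eq_zero, Prod.mk.injEq] at h ⊢
    obtain ⟨hx, hy, -⟩ := h
    obtain rfl : x = 0 := (mul_eq_zero.mp hx).resolve_left hv
    exact ⟨rfl, by simpa using hy⟩
  · simp
  · intro x y
    simp only [quadForm]
    field_simp
    ring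

theorem orthogonal_values_of_fst_eq_zero (h2 : (2 : k) ≠ 0) {v : k × k × k} (hv : v.1 = 0)
    (hQ : quadForm v ≠ 0) :
    {q | ∃ w, w ≠ 0 ∧ w ∈ {w | polarForm v w = 0} ∧ q = quadForm w} =
      {q | ∃ x y, (x, y) ≠ (0, 0) ∧ q = -(quadForm v * x ^ 2 + y ^ 2)} := by
  obtain ⟨a, b, c⟩ := v
  change a = 0 at hv
  subst hv
  have hb : b ≠ 0 := by rintro rfl; simp [quadForm] at hQ
  obtain ⟨s, hs⟩ : ∃ s, 2 * b * s = c := ⟨c / (2 * b), by field_simp⟩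
  subst hs
  refine setOf_values_eq_of_parametrization
    (fun x y => (b * x - y, s * (b * x - y), b * x + y + s ^ 2 * (b * x - y))) ?_ ?_ ?_ ?_ ?_
  · intro x y
    simp only [Set.mem_ofPred_eq, polarForm]
    ring
  · rintro ⟨w₁, w₂, w₃⟩ hw
    simp only [Set.mem_ofPred_eq, polarForm] at hw
    have hw₂ : w₂ = s * w₁ := by
      apply mul_left_cancel₀ (mul_ne_zero h2 hb)
      linear_combination -hw
    refine ⟨(w₁ + w₃ - s ^ 2 * w₁) / (2 * b), (w₃ - s ^ 2 * w₁ - w₁) / 2, ?_⟩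
    simp only [Prod.mk.injEq, hw₂]
    refine ⟨?_, ?_, ?_⟩ <;> field_simp <;> ring
  · intro x y h
    simp only [Prod.mk_eq_zero, Prod.mk.injEq] at h ⊢
    obtain ⟨h₁, -, h₃⟩ := h
    have hx : x = 0 := by
      have : 2 * b * x = 0 := by linear_combination h₁ + h₃ - s ^ 2 * h₁
      simpa [h2, hb] using this
    subst hx
    exact ⟨rfl, by simpa using h₁⟩
  · simp
  · intro x y
    simp only [quadForm]
    ring

end OrthogonalPlane

theorem stmt_10 {k : Type*} [Field k] (hchar : ringChar k ≠ 2)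
    (α : k) (hα : α ≠ 0) (v : k × k × k)
    (hv : v.1 * v.2.2 - v.2.1 ^ 2 = α) :
    {q : k | ∃ w : k × k × k, w ≠ 0 ∧
        v.1 * w.2.2 + v.2.2 * w.1 - 2 * v.2.1 * w.2.1 = 0 ∧
        q = w.1 * w.2.2 - w.2.1 ^ 2} =
      {q : k | ∃ x y : k, (x, y) ≠ (0, 0) ∧ q = -(α * x ^ 2 + y ^ 2)} := by
  change OrthogonalPlane.quadForm v = α at hv
  subst hv
  rcases eq_or_ne v.1 0 with hv | hv
  · exact OrthogonalPlane.orthogonal_values_of_fst_eq_zero (Ring.two_ne_zero hchar) hv hα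
  · exact OrthogonalPlane.orthogonal_values_of_fst_ne_zero hv
end

section
/- Let p be an odd prime, let α ∈ ℤ_p be a p-adic unit with −α not a square in ℚ_p, and let x ∈ ℚ_pˣ. For all pairs (s,t), (s',t') ∈ ℚ_p² \ {(0,0)}, the quantities s² + αt², s'² + αt'², s² + αx²t², s'² + αx²t'² are all nonzero, and the cross-ratio r = ((s² + αx²t²)(s'² + αt'²)) / ((s² + αt²)(s'² + αx²t'²)) satisfies min(|x|², |x|⁻²) ≤ |r| ≤ max(|x|², |x|⁻²). Moreover, if |x² − 1| < 1 then |r − 1| ≤ |x² − 1|. (These are the cross-ratio estimates computing the Hilbert distance between the points v_α = (α,0,1) and v₁ = (αx²,0,1) of the hyperbolic disc, the dual points being w = (s², st, t²), w' = (s'², s't', t'²).) -/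
/-!
Since `-α` is not a square, Hensel's lemma (p odd) shows that `a² + α` is a unit for every
`a ∈ ℤ_p`; by homogeneity and the ultrametric inequality this gives
`‖s² + αt²‖ = max(‖s‖, ‖t‖)²`. Scaling `t` by `c` multiplies this by at most `max(1, ‖c‖)²`;
applying this to `(s, t)` with `c = x` and to `(s', x t')` with `c = x⁻¹` bounds `‖r‖` by
`max(‖x‖, ‖x‖⁻¹)²`.
The lower bound is the upper bound for `r⁻¹`, the cross-ratio with the two points exchanged.
When `‖x² - 1‖ < 1` we have `‖x‖ = 1`, the denominator has norm `max(‖s‖,‖t‖)² max(‖s'‖,‖t'‖)²`,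
and `r - 1 = α (x² - 1)(t²s'² - s²t'²) / denominator`.
-/

theorem max_mul_le_max_one_mul_max {a b c : ℝ} (ha : 0 ≤ a) (hb : 0 ≤ b) :
    max a (c * b) ≤ max 1 c * max a b :=
  max_le ((le_max_left a b).trans (le_mul_of_one_le_left (ha.trans (le_max_left a b))
      (le_max_left 1 c)))
    (mul_le_mul (le_max_right 1 c) (le_max_right a b) hb (zero_le_one.trans (le_max_left 1 c)))

theorem max_one_sq_mul_max_one_inv_sq {c : ℝ} (hc : 0 < c) :
    max 1 c ^ 2 * max 1 c⁻¹ ^ 2 = max (c ^ 2) (c ^ 2)⁻¹ := by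
  rcases le_total c 1 with h | h
  · have h' : 1 ≤ c⁻¹ := (one_le_inv₀ hc).mpr h
    have h'' : c ^ 2 ≤ (c ^ 2)⁻¹ := by
      rw [← inv_pow]; exact pow_le_pow_left₀ hc.le (h.trans h') 2
    rw [max_eq_left h, max_eq_right h', max_eq_right h'', one_pow, one_mul, inv_pow]
  · have h' : c⁻¹ ≤ 1 := inv_le_one_of_one_le₀ h
    have h'' : (c ^ 2)⁻¹ ≤ c ^ 2 := by
      rw [← inv_pow]; exact pow_le_pow_left₀ (by positivity) (h'.trans h) 2
    rw [max_eq_right h, max_eq_left h', max_eq_left h'', one_pow, mul_one]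

namespace IsUltrametricDist

variable {K : Type*} [NormedField K] [IsUltrametricDist K]

theorem norm_eq_one_of_norm_sq_sub_one_lt_one {x : K} (hx : ‖x ^ 2 - 1‖ < 1) : ‖x‖ = 1 := by
  have hx2 : ‖x ^ 2‖ = 1 := by
    rw [← sub_add_cancel (x ^ 2) 1,
      norm_add_eq_max_of_norm_ne_norm (by rw [norm_one]; exact hx.ne), norm_one,
      max_eq_right hx.le]
  rwa [norm_pow, pow_eq_one_iff_of_nonneg (norm_nonneg x) two_ne_zero] at hx2

theorem norm_sq_mul_sq_sub_sq_mul_sq_le (s t s' t' : K) :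
    ‖t ^ 2 * s' ^ 2 - s ^ 2 * t' ^ 2‖ ≤ max ‖s‖ ‖t‖ ^ 2 * max ‖s'‖ ‖t'‖ ^ 2 := by
  rw [sub_eq_add_neg]
  refine (norm_add_le_max _ _).trans (max_le ?_ ?_) <;>
  · simp only [norm_neg, norm_mul, norm_pow]
    gcongr <;> simp

end IsUltrametricDist

def crossRatio {K : Type*} [Field K] (α x s t s' t' : K) : K :=
  ((s ^ 2 + α * x ^ 2 * t ^ 2) * (s' ^ 2 + α * t' ^ 2)) /
    ((s ^ 2 + α * t ^ 2) * (s' ^ 2 + α * x ^ 2 * t' ^ 2))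

section CrossRatio

variable {K : Type*} [Field K]

theorem crossRatio_def' (α x s t s' t' : K) :
    crossRatio α x s t s' t' =
      ((s ^ 2 + α * (x * t) ^ 2) * (s' ^ 2 + α * t' ^ 2)) /
        ((s ^ 2 + α * t ^ 2) * (s' ^ 2 + α * (x * t') ^ 2)) := by
  simp only [crossRatio, mul_pow, mul_assoc]

theorem crossRatio_swap (α x s t s' t' : K) :
    crossRatio α x s' t' s t = (crossRatio α x s t s' t')⁻¹ := by
  rw [crossRatio, crossRatio, inv_div, mul_comm (s' ^ 2 + _), mul_comm (s' ^ 2 + _)]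

end CrossRatio

namespace PadicInt

open Polynomial

variable {p : ℕ} [Fact p.Prime]

theorem norm_two_eq_one_s11 (hp : p ≠ 2) : ‖(2 : ℤ_[p])‖ = 1 := by
  have hcop : p.Coprime 2 := (Nat.coprime_primes Fact.out Nat.prime_two).mpr hp
  exact_mod_cast norm_natCast_eq_one_iff.mpr hcop

theorem isSquare_of_norm_sq_sub_lt_one (hp : p ≠ 2) {a b : ℤ_[p]} (ha : ‖a‖ = 1)
    (h : ‖a ^ 2 - b‖ < 1) : IsSquare b := by
  have hnorm : ‖(X ^ 2 - C b).aeval a‖ < ‖(X ^ 2 - C b).derivative.aeval a‖ ^ 2 := by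
    simpa [derivative_pow, norm_two_eq_one_s11 hp, ha] using h
  obtain ⟨z, hz, -⟩ := hensels_lemma hnorm
  exact ⟨z, by simpa [sub_eq_zero, sq, eq_comm] using hz⟩

theorem norm_sq_add_eq_one (hp : p ≠ 2) {α : ℤ_[p]} (hu : IsUnit α)
    (hns : ¬IsSquare (-(α : ℚ_[p]))) (a : ℤ_[p]) : ‖a ^ 2 + α‖ = 1 := by
  have hα : ‖α‖ = 1 := isUnit_iff.mp hu
  refine le_antisymm (norm_le_one _) (not_lt.mp fun hlt => hns ?_)
  have ha : ‖a‖ = 1 := by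
    refine le_antisymm (norm_le_one a) (not_lt.mp fun ha => hlt.ne ?_)
    have hsq : ‖a ^ 2‖ < ‖α‖ := by
      rw [hα, norm_pow]
      exact pow_lt_one₀ (norm_nonneg a) ha two_ne_zero
    rw [IsUltrametricDist.norm_add_eq_max_of_norm_ne_norm hsq.ne, max_eq_right hsq.le, hα]
  obtain ⟨z, hz⟩ := isSquare_of_norm_sq_sub_lt_one hp ha (b := -α) (by rwa [sub_neg_eq_add])
  exact ⟨z, by exact_mod_cast congrArg ((↑) : ℤ_[p] → ℚ_[p]) hz⟩

end PadicInt

namespace Padic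

variable {p : ℕ} [Fact p.Prime] {α : ℤ_[p]}

theorem norm_sq_add_mul_sq (hp : p ≠ 2) (hu : IsUnit α) (hns : ¬IsSquare (-(α : ℚ_[p])))
    (s t : ℚ_[p]) : ‖s ^ 2 + α * t ^ 2‖ = max ‖s‖ ‖t‖ ^ 2 := by
  have hα : ‖(α : ℚ_[p])‖ = 1 := PadicInt.isUnit_iff.mp hu
  by_cases hst : ‖s‖ = ‖t‖
  · rcases eq_or_ne t 0 with rfl | ht
    · simp_all
    have hst' : ‖s / t‖ ≤ 1 := by rw [norm_div, hst, div_self (norm_ne_zero_iff.mpr ht)]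
    obtain ⟨z, hz⟩ : ∃ z : ℤ_[p], (z : ℚ_[p]) = s / t := ⟨⟨s / t, hst'⟩, rfl⟩
    have hunit := PadicInt.norm_sq_add_eq_one hp hu hns z
    rw [PadicInt.norm_def, PadicInt.coe_add, PadicInt.coe_pow, hz] at hunit
    calc ‖s ^ 2 + α * t ^ 2‖ = ‖t‖ ^ 2 * ‖(s / t) ^ 2 + α‖ := by
          rw [← norm_pow, ← norm_mul]; congr 1; field_simp
      _ = max ‖s‖ ‖t‖ ^ 2 := by rw [hunit, mul_one, hst, max_self]
  · have hne : ‖s ^ 2‖ ≠ ‖(α : ℚ_[p]) * t ^ 2‖ := by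
      rw [norm_mul, hα, one_mul, norm_pow, norm_pow]
      exact fun h => hst ((pow_left_inj₀ (norm_nonneg s) (norm_nonneg t) two_ne_zero).mp h)
    rw [IsUltrametricDist.norm_add_eq_max_of_norm_ne_norm hne, norm_mul, hα, one_mul,
      norm_pow, norm_pow, ← pow_left_monotoneOn.map_max (norm_nonneg s) (norm_nonneg t)]

theorem sq_add_mul_sq_ne_zero (hp : p ≠ 2) (hu : IsUnit α) (hns : ¬IsSquare (-(α : ℚ_[p])))
    {s t : ℚ_[p]} (h : (s, t) ≠ (0, 0)) : s ^ 2 + α * t ^ 2 ≠ 0 := by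
  rw [← norm_ne_zero_iff, norm_sq_add_mul_sq hp hu hns]
  refine pow_ne_zero 2 (lt_max_iff.mpr ?_).ne'
  simpa [← not_and_or] using h

theorem sq_add_mul_mul_sq_ne_zero (hp : p ≠ 2) (hu : IsUnit α)
    (hns : ¬IsSquare (-(α : ℚ_[p]))) {x s t : ℚ_[p]} (hx : x ≠ 0) (h : (s, t) ≠ (0, 0)) :
    s ^ 2 + α * x ^ 2 * t ^ 2 ≠ 0 := by
  rw [mul_assoc, ← mul_pow]
  exact sq_add_mul_sq_ne_zero hp hu hns (by simp_all)

theorem norm_sq_add_mul_mul_sq_le (hp : p ≠ 2) (hu : IsUnit α)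
    (hns : ¬IsSquare (-(α : ℚ_[p]))) (s t c : ℚ_[p]) :
    ‖s ^ 2 + α * (c * t) ^ 2‖ ≤ max 1 ‖c‖ ^ 2 * ‖s ^ 2 + α * t ^ 2‖ := by
  rw [norm_sq_add_mul_sq hp hu hns, norm_sq_add_mul_sq hp hu hns, norm_mul, ← mul_pow]
  gcongr
  exact max_mul_le_max_one_mul_max (norm_nonneg s) (norm_nonneg t)

theorem norm_crossRatio_le (hp : p ≠ 2) (hu : IsUnit α) (hns : ¬IsSquare (-(α : ℚ_[p])))
    {x : ℚ_[p]} (hx : x ≠ 0) (s t s' t' : ℚ_[p]) :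
    ‖crossRatio (α : ℚ_[p]) x s t s' t'‖ ≤ max (‖x‖ ^ 2) (‖x‖ ^ 2)⁻¹ := by
  have hnum := norm_sq_add_mul_mul_sq_le hp hu hns s t x
  have hnum' := norm_sq_add_mul_mul_sq_le hp hu hns s' (x * t') x⁻¹
  rw [inv_mul_cancel_left₀ hx, norm_inv] at hnum'
  rw [← max_one_sq_mul_max_one_inv_sq (norm_pos_iff.mpr hx), crossRatio_def', norm_div,
    norm_mul, norm_mul]
  rcases eq_or_ne (‖s ^ 2 + α * t ^ 2‖ * ‖s' ^ 2 + α * (x * t') ^ 2‖) 0 with h0 | h0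
  · rw [h0, div_zero]; positivity
  rw [div_le_iff₀ (lt_of_le_of_ne (by positivity) h0.symm)]
  calc _ ≤ max 1 ‖x‖ ^ 2 * ‖s ^ 2 + α * t ^ 2‖ *
          (max 1 ‖x‖⁻¹ ^ 2 * ‖s' ^ 2 + α * (x * t') ^ 2‖) := by gcongr
    _ = _ := by ring

theorem min_le_norm_crossRatio (hp : p ≠ 2) (hu : IsUnit α)
    (hns : ¬IsSquare (-(α : ℚ_[p]))) {x : ℚ_[p]} (hx : x ≠ 0) {s t s' t' : ℚ_[p]}
    (h : (s, t) ≠ (0, 0)) (h' : (s', t') ≠ (0, 0)) :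
    min (‖x‖ ^ 2) (‖x‖ ^ 2)⁻¹ ≤ ‖crossRatio (α : ℚ_[p]) x s t s' t'‖ := by
  have hr : 0 < ‖crossRatio (α : ℚ_[p]) x s t s' t'‖ :=
    norm_pos_iff.mpr <| div_ne_zero
      (mul_ne_zero (sq_add_mul_mul_sq_ne_zero hp hu hns hx h) (sq_add_mul_sq_ne_zero hp hu hns h'))
      (mul_ne_zero (sq_add_mul_sq_ne_zero hp hu hns h) (sq_add_mul_mul_sq_ne_zero hp hu hns hx h'))
  have hinv := norm_crossRatio_le hp hu hns hx s' t' s t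
  rw [crossRatio_swap, norm_inv] at hinv
  rcases le_max_iff.mp hinv with hle | hle
  · exact min_le_of_right_le ((inv_le_comm₀ hr (by positivity)).mp hle)
  · exact min_le_of_left_le ((inv_le_inv₀ hr (by positivity)).mp hle)

theorem norm_crossRatio_sub_one_le (hp : p ≠ 2) (hu : IsUnit α)
    (hns : ¬IsSquare (-(α : ℚ_[p]))) {x : ℚ_[p]} (hx : ‖x ^ 2 - 1‖ < 1) {s t s' t' : ℚ_[p]}
    (h : (s, t) ≠ (0, 0)) (h' : (s', t') ≠ (0, 0)) :
    ‖crossRatio (α : ℚ_[p]) x s t s' t' - 1‖ ≤ ‖x ^ 2 - 1‖ := by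
  have hα : ‖(α : ℚ_[p])‖ = 1 := PadicInt.isUnit_iff.mp hu
  have hx1 := IsUltrametricDist.norm_eq_one_of_norm_sq_sub_one_lt_one hx
  have hden : (s ^ 2 + α * t ^ 2) * (s' ^ 2 + α * x ^ 2 * t' ^ 2) ≠ 0 :=
    mul_ne_zero (sq_add_mul_sq_ne_zero hp hu hns h)
      (sq_add_mul_mul_sq_ne_zero hp hu hns (norm_ne_zero_iff.mp (hx1 ▸ one_ne_zero)) h')
  have hnorm_den : ‖(s ^ 2 + α * t ^ 2) * (s' ^ 2 + α * x ^ 2 * t' ^ 2)‖ =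
      max ‖s‖ ‖t‖ ^ 2 * max ‖s'‖ ‖t'‖ ^ 2 := by
    rw [mul_assoc _ (x ^ 2), ← mul_pow, norm_mul, norm_sq_add_mul_sq hp hu hns,
      norm_sq_add_mul_sq hp hu hns, norm_mul, hx1, one_mul]
  have hnum : (s ^ 2 + α * x ^ 2 * t ^ 2) * (s' ^ 2 + α * t' ^ 2) -
      (s ^ 2 + α * t ^ 2) * (s' ^ 2 + α * x ^ 2 * t' ^ 2) =
      α * (x ^ 2 - 1) * (t ^ 2 * s' ^ 2 - s ^ 2 * t' ^ 2) := by ring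
  rw [crossRatio, div_sub_one hden, hnum, norm_div, div_le_iff₀ (norm_pos_iff.mpr hden),
    hnorm_den, norm_mul, norm_mul, hα, one_mul]
  gcongr
  exact IsUltrametricDist.norm_sq_mul_sq_sub_sq_mul_sq_le s t s' t'

end Padic

theorem stmt_11 (p : ℕ) [Fact p.Prime] (hp : p ≠ 2)
    (α : ℤ_[p]) (hu : IsUnit α) (hns : ¬ IsSquare (-(α : ℚ_[p])))
    (x : ℚ_[p]) (hx : x ≠ 0)
    (s t s' t' : ℚ_[p]) (h1 : (s, t) ≠ (0, 0)) (h2 : (s', t') ≠ (0, 0)) :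
    s ^ 2 + (α : ℚ_[p]) * t ^ 2 ≠ 0 ∧
    s' ^ 2 + (α : ℚ_[p]) * t' ^ 2 ≠ 0 ∧
    s ^ 2 + (α : ℚ_[p]) * x ^ 2 * t ^ 2 ≠ 0 ∧
    s' ^ 2 + (α : ℚ_[p]) * x ^ 2 * t' ^ 2 ≠ 0 ∧
    (let r : ℚ_[p] :=
      ((s ^ 2 + (α : ℚ_[p]) * x ^ 2 * t ^ 2) * (s' ^ 2 + (α : ℚ_[p]) * t' ^ 2)) /
        ((s ^ 2 + (α : ℚ_[p]) * t ^ 2) * (s' ^ 2 + (α : ℚ_[p]) * x ^ 2 * t' ^ 2));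
      min (‖x‖ ^ 2) ((‖x‖ ^ 2)⁻¹) ≤ ‖r‖ ∧ ‖r‖ ≤ max (‖x‖ ^ 2) ((‖x‖ ^ 2)⁻¹) ∧
        (‖x ^ 2 - 1‖ < 1 → ‖r - 1‖ ≤ ‖x ^ 2 - 1‖)) :=
  ⟨Padic.sq_add_mul_sq_ne_zero hp hu hns h1,
    Padic.sq_add_mul_sq_ne_zero hp hu hns h2,
    Padic.sq_add_mul_mul_sq_ne_zero hp hu hns hx h1,
    Padic.sq_add_mul_mul_sq_ne_zero hp hu hns hx h2,
    Padic.min_le_norm_crossRatio hp hu hns hx h1 h2,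
    Padic.norm_crossRatio_le hp hu hns hx s t s' t',
    fun hx1 => Padic.norm_crossRatio_sub_one_le hp hu hns hx1 h1 h2⟩
end

section
/- Let p be a prime. For n ∈ ℤ let S_n = {x ∈ ℚ_p : x ≠ 0, |x − 1| ≤ pⁿ and |x⁻¹ − 1| ≤ pⁿ} be the symmetric ball of radius pⁿ in ℚ_pˣ. Then for all integers m ≤ n: if m ≤ 0, the product set S_m · S_n = {ab : a ∈ S_m, b ∈ S_n} equals S_n; and if m ≥ 0, then S_m · S_n = S_{m+n}. -/
open scoped Pointwise

/-- The symmetric ball of radius `pⁿ` in the multiplicative group `ℚ_pˣ`. -/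
def symBall (p : ℕ) [Fact p.Prime] (n : ℤ) : Set ℚ_[p] :=
  {x | x ≠ 0 ∧ ‖x - 1‖ ≤ (p : ℝ) ^ n ∧ ‖x⁻¹ - 1‖ ≤ (p : ℝ) ^ n}

/-!
The inclusion `S_m S_n ⊆ S_t` for `t ≥ m, n, m + n` is the ultrametric inequality applied to
`ab - 1 = (a - 1)(b - 1) + (a - 1) + (b - 1)` and to the same identity for `a⁻¹, b⁻¹`; with
`1 ∈ S_m` this settles `m ≤ 0`. For `k ≥ 0` the radius `pᵏ` is at least `1`, so `S_k` is just
`{x : |v(x)| ≤ k}` for the `p`-adic valuation `v`, and for `0 ≤ m ≤ n` every `c ∈ S_{m+n}`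
factors as `pⁱ · p⁻ⁱc` with `|i| ≤ m` and `|v(c) - i| ≤ n`.
-/

namespace IsUltrametricDist

variable {R : Type*} [SeminormedRing R] [IsUltrametricDist R]

theorem norm_mul_sub_one_le (a b : R) :
    ‖a * b - 1‖ ≤ max (‖a - 1‖ * ‖b - 1‖) (max ‖a - 1‖ ‖b - 1‖) := by
  have h : a * b - 1 = (a - 1) * (b - 1) + ((a - 1) + (b - 1)) := by noncomm_ring
  rw [h]
  exact (norm_add_le_max _ _).trans
    (max_le_max (norm_mul_le _ _) (norm_add_le_max _ _))

theorem norm_sub_one_le_iff [NormOneClass R] {x : R} {r : ℝ} (hr : 1 ≤ r) :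
    ‖x - 1‖ ≤ r ↔ ‖x‖ ≤ r := by
  constructor <;> intro h
  · simpa using (norm_add_le_max (x - 1) 1).trans (max_le h (by simpa using hr))
  · simpa [sub_eq_add_neg] using (norm_add_le_max x (-1)).trans (max_le h (by simpa using hr))

end IsUltrametricDist

namespace Padic

variable {p : ℕ} [Fact p.Prime]

theorem norm_le_zpow_iff_neg_valuation_le {x : ℚ_[p]} (hx : x ≠ 0) (k : ℤ) :
    ‖x‖ ≤ (p : ℝ) ^ k ↔ -x.valuation ≤ k := by
  rw [norm_eq_zpow_neg_valuation hx]
  exact zpow_le_zpow_iff_right₀ (by exact_mod_cast (Fact.out : p.Prime).one_lt)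

end Padic

section symBall

variable {p : ℕ} [Fact p.Prime]

theorem one_mem_symBall (n : ℤ) : (1 : ℚ_[p]) ∈ symBall p n := by
  have : (0 : ℝ) ≤ (p : ℝ) ^ n := by positivity
  simpa [symBall] using this

theorem mem_symBall_iff_abs_valuation_le {k : ℤ} (hk : 0 ≤ k) {x : ℚ_[p]} :
    x ∈ symBall p k ↔ x ≠ 0 ∧ |x.valuation| ≤ k := by
  have hpk : (1 : ℝ) ≤ (p : ℝ) ^ k :=
    one_le_zpow₀ (by exact_mod_cast (Fact.out : p.Prime).one_lt.le) hk
  simp only [symBall, Set.mem_ofPred_eq, IsUltrametricDist.norm_sub_one_le_iff hpk, abs_le]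
  refine and_congr_right fun hx => ?_
  rw [Padic.norm_le_zpow_iff_neg_valuation_le hx, norm_inv,
    ← norm_inv, Padic.norm_le_zpow_iff_neg_valuation_le (inv_ne_zero hx), Padic.valuation_inv]
  omega

theorem symBall_mul_subset {m n t : ℤ} (hmn : m + n ≤ t) (hm : m ≤ t) (hn : n ≤ t) :
    symBall p m * symBall p n ⊆ symBall p t := by
  have hp : (1 : ℝ) ≤ p := by exact_mod_cast (Fact.out : p.Prime).one_lt.le
  have bound : ∀ a b : ℚ_[p], ‖a - 1‖ ≤ (p : ℝ) ^ m → ‖b - 1‖ ≤ (p : ℝ) ^ n →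
      ‖a * b - 1‖ ≤ (p : ℝ) ^ t := by
    intro a b ha hb
    calc ‖a * b - 1‖ ≤ max (‖a - 1‖ * ‖b - 1‖) (max ‖a - 1‖ ‖b - 1‖) :=
          IsUltrametricDist.norm_mul_sub_one_le a b
      _ ≤ max ((p : ℝ) ^ m * (p : ℝ) ^ n) (max ((p : ℝ) ^ m) ((p : ℝ) ^ n)) := by
          gcongr
      _ ≤ (p : ℝ) ^ t := by
          rw [← zpow_add₀ (by positivity)]
          exact max_le (zpow_le_zpow_right₀ hp hmn)
            (max_le (zpow_le_zpow_right₀ hp hm) (zpow_le_zpow_right₀ hp hn))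
  rintro _ ⟨a, ⟨ha0, ha, ha'⟩, b, ⟨hb0, hb, hb'⟩, rfl⟩
  exact ⟨mul_ne_zero ha0 hb0, bound a b ha hb, by rw [mul_inv]; exact bound _ _ ha' hb'⟩

theorem symBall_add_subset_mul {m n : ℤ} (hm : 0 ≤ m) (hn : 0 ≤ n) :
    symBall p (m + n) ⊆ symBall p m * symBall p n := by
  intro c hc
  rw [mem_symBall_iff_abs_valuation_le (add_nonneg hm hn)] at hc
  obtain ⟨hc0, hvc⟩ := hc
  obtain ⟨i, hi, hci⟩ : ∃ i : ℤ, |i| ≤ m ∧ |c.valuation - i| ≤ n := by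
    refine ⟨max (-m) (min c.valuation m), ?_, ?_⟩ <;> rw [abs_le] at * <;> omega
  have hp0 : (p : ℚ_[p]) ≠ 0 := by exact_mod_cast (Fact.out : p.Prime).ne_zero
  refine ⟨(p : ℚ_[p]) ^ i, ?_, (p : ℚ_[p]) ^ (-i) * c, ?_, ?_⟩
  · rw [mem_symBall_iff_abs_valuation_le hm, Padic.valuation_zpow, Padic.valuation_p, mul_one]
    exact ⟨zpow_ne_zero _ hp0, hi⟩
  · have hpi := zpow_ne_zero (-i) hp0
    rw [mem_symBall_iff_abs_valuation_le hn, Padic.valuation_mul hpi hc0, Padic.valuation_zpow,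
      Padic.valuation_p, mul_one, neg_add_eq_sub]
    exact ⟨mul_ne_zero hpi hc0, hci⟩
  · simpa only [zpow_neg] using mul_inv_cancel_left₀ (zpow_ne_zero i hp0) c

end symBall

theorem stmt_12 (p : ℕ) [Fact p.Prime] (m n : ℤ) (hmn : m ≤ n) :
    (m ≤ 0 → symBall p m * symBall p n = symBall p n) ∧
    (0 ≤ m → symBall p m * symBall p n = symBall p (m + n)) := by
  refine ⟨fun hm => ?_, fun hm => ?_⟩
  · refine (symBall_mul_subset (by omega) hmn le_rfl).antisymm fun b hb => ?_
    exact ⟨1, one_mem_symBall m, b, hb, one_mul b⟩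
  · exact (symBall_mul_subset le_rfl (by omega) (by omega)).antisymm
      (symBall_add_subset_mul hm (hm.trans hmn))
end

section
/- Let n ≥ 1, let Ω ⊆ ℝⁿ be a nonempty open bounded convex set, and let x, y ∈ Ω with x ≠ y. Suppose s₁ < 0 and s₂ > 1 are real numbers such that a = x + s₁·(y − x) and b = x + s₂·(y − x) both lie in the frontier (topological boundary) of Ω. Then the supremum of (φ(y)·φ'(x)) / (φ(x)·φ'(y)) over all pairs of affine maps φ, φ' : ℝⁿ → ℝ that are strictly positive at every point of Ω equals ((1 − s₁)·s₂) / ((−s₁)·(s₂ − 1)). (This identifies the classical Hilbert cross-ratio D_Ω(x,y) = (ay/ax)(bx/by) with a supremum over the dual convex set.) -/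
private lemma affine_eval (n : ℕ) (φ : (Fin n → ℝ) →ᵃ[ℝ] ℝ) (x y : Fin n → ℝ) (s : ℝ) :
    φ (x + s • (y - x)) = φ x + s * (φ y - φ x) := by
  have h1 : x + s • (y - x) = s • (y - x) +ᵥ x := by
    simp [vadd_eq_add, add_comm]
  rw [h1, AffineMap.map_vadd]
  have h2 : φ.linear (y - x) = φ y - φ x := by
    have := φ.linearMap_vsub y x
    simpa [vsub_eq_sub] using this
  simp [map_smul, h2, vadd_eq_add, add_comm, smul_eq_mul]

private lemma support_at (n : ℕ) (Ω : Set (Fin n → ℝ)) (hopen : IsOpen Ω)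
    (hconv : Convex ℝ Ω) (p : Fin n → ℝ) (hp : p ∈ frontier Ω) :
    ∃ φ : (Fin n → ℝ) →ᵃ[ℝ] ℝ, (∀ z ∈ Ω, 0 < φ z) ∧ φ p = 0 := by
  have hpΩ : p ∉ Ω := by
    intro h
    have := hopen.frontier_eq ▸ hp
    exact this.2 h
  obtain ⟨f, hf⟩ := geometric_hahn_banach_open_point hconv hopen hpΩ
  refine ⟨AffineMap.mk (fun z => f p - f z) (-(f : (Fin n → ℝ) →ₗ[ℝ] ℝ)) ?_, ?_, sub_self (f p)⟩
  · intro q v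
    simp [vadd_eq_add, map_add]
    ring
  · intro z hz
    have := hf z hz
    simpa using sub_pos.mpr this

theorem stmt_13 (n : ℕ) (hn : 1 ≤ n) (Ω : Set (Fin n → ℝ))
    (hne : Ω.Nonempty) (hopen : IsOpen Ω) (hbdd : Bornology.IsBounded Ω)
    (hconv : Convex ℝ Ω)
    (x y : Fin n → ℝ) (hx : x ∈ Ω) (hy : y ∈ Ω) (hxy : x ≠ y)
    (s₁ s₂ : ℝ) (hs₁ : s₁ < 0) (hs₂ : 1 < s₂)
    (ha : x + s₁ • (y - x) ∈ frontier Ω) (hb : x + s₂ • (y - x) ∈ frontier Ω) :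
    sSup {r : ℝ | ∃ φ φ' : (Fin n → ℝ) →ᵃ[ℝ] ℝ,
        (∀ z ∈ Ω, 0 < φ z) ∧ (∀ z ∈ Ω, 0 < φ' z) ∧
        r = (φ y * φ' x) / (φ x * φ' y)} =
      ((1 - s₁) * s₂) / ((-s₁) * (s₂ - 1)) := by
  have hs₁' : (0:ℝ) < -s₁ := by linarith
  have hs₂' : (0:ℝ) < s₂ - 1 := by linarith
  apply IsGreatest.csSup_eq
  constructor
  · -- membership: supporting hyperplanes at a and b
    obtain ⟨φ, hφpos, hφa⟩ := support_at n Ω hopen hconv _ ha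
    obtain ⟨φ', hφ'pos, hφ'b⟩ := support_at n Ω hopen hconv _ hb
    refine ⟨φ, φ', hφpos, hφ'pos, ?_⟩
    have hx1 : 0 < φ x := hφpos x hx
    have hy2 : 0 < φ' y := hφ'pos y hy
    have e1 : φ x + s₁ * (φ y - φ x) = 0 := by rw [← affine_eval n φ x y s₁]; exact hφa
    have e2 : φ' x + s₂ * (φ' y - φ' x) = 0 := by rw [← affine_eval n φ' x y s₂]; exact hφ'b
    have h1 : (-s₁) * φ y = (1 - s₁) * φ x := by linarith
    have h2 : (s₂ - 1) * φ' x = s₂ * φ' y := by linarith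
    rw [div_eq_div_iff (by positivity) (by positivity)]
    linear_combination (-(s₂ * φ' y)) * h1 + (s₁ * φ y) * h2
  · -- upper bound
    rintro r ⟨φ, φ', hφpos, hφ'pos, rfl⟩
    have hcφ : Continuous φ := φ.continuous_of_finiteDimensional
    have hcφ' : Continuous φ' := φ'.continuous_of_finiteDimensional
    have hnn : closure Ω ⊆ {z | 0 ≤ φ z} :=
      closure_minimal (fun z hz => (hφpos z hz).le) (isClosed_le continuous_const hcφ)
    have hnn' : closure Ω ⊆ {z | 0 ≤ φ' z} :=
      closure_minimal (fun z hz => (hφ'pos z hz).le) (isClosed_le continuous_const hcφ')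
    have h1 : 0 ≤ φ (x + s₁ • (y - x)) := hnn (frontier_subset_closure ha)
    have h2 : 0 ≤ φ' (x + s₂ • (y - x)) := hnn' (frontier_subset_closure hb)
    rw [affine_eval] at h1 h2
    have hx1 : 0 < φ x := hφpos x hx
    have hy1 : 0 < φ y := hφpos y hy
    have hx2 : 0 < φ' x := hφ'pos x hx
    have hy2 : 0 < φ' y := hφ'pos y hy
    -- (-s₁) * φ y ≤ (1 - s₁) * φ x  and  (s₂ - 1) * φ' x ≤ s₂ * φ' y
    have i1 : (-s₁) * φ y ≤ (1 - s₁) * φ x := by nlinarith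
    have i2 : (s₂ - 1) * φ' x ≤ s₂ * φ' y := by nlinarith
    rw [div_le_div_iff₀ (by positivity) (by positivity)]
    nlinarith [mul_le_mul_of_nonneg_right i1 (mul_nonneg hs₂'.le hx2.le),
      mul_le_mul_of_nonneg_right i2 (mul_nonneg (by linarith : (0:ℝ) ≤ 1 - s₁) hx1.le)]
end

section
/- Let n ≥ 1, let Ω ⊆ ℝⁿ be a nonempty open bounded convex set, and let x, y ∈ Ω with x ≠ y. Suppose s₁ < 0 and s₂ > 1 are real numbers such that a = x + s₁·(y − x) and b = x + s₂·(y − x) both lie in the frontier of Ω, and set D = ((1 − s₁)·s₂) / ((−s₁)·(s₂ − 1)). Then the set { (φ(y)·φ'(x)) / (φ(x)·φ'(y)) : φ, φ' affine maps ℝⁿ → ℝ strictly positive at every point of Ω } is exactly the closed interval [D⁻¹, D]. -/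
lemma aff_line_14 {n : ℕ} (φ : (Fin n → ℝ) →ᵃ[ℝ] ℝ) (x y : Fin n → ℝ) (s : ℝ) :
    φ (x + s • (y - x)) = φ x + s * (φ y - φ x) := by
  have h1 : x + s • (y - x) = s • (y - x) +ᵥ x := by
    simp [vadd_eq_add, add_comm]
  rw [h1, AffineMap.map_vadd, map_smul]
  have h2 : φ.linear (y - x) = φ y - φ x := by
    have := φ.linearMap_vsub y x
    simpa [vsub_eq_sub] using this
  simp [h2, vadd_eq_add, add_comm, smul_eq_mul]

lemma nonneg_closure_14 {n : ℕ} {Ω : Set (Fin n → ℝ)} (φ : (Fin n → ℝ) →ᵃ[ℝ] ℝ)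
    (hpos : ∀ z ∈ Ω, 0 < φ z) {p : Fin n → ℝ} (hp : p ∈ closure Ω) : 0 ≤ φ p := by
  have hcl : IsClosed {z : Fin n → ℝ | 0 ≤ φ z} :=
    isClosed_le continuous_const φ.continuous_of_finiteDimensional
  exact closure_minimal (fun z hz => (hpos z hz).le) hcl hp

lemma support_at_14 {n : ℕ} {Ω : Set (Fin n → ℝ)} (hopen : IsOpen Ω) (hconv : Convex ℝ Ω)
    {p : Fin n → ℝ} (hp : p ∈ frontier Ω) :
    ∃ φ : (Fin n → ℝ) →ᵃ[ℝ] ℝ, (∀ z ∈ Ω, 0 < φ z) ∧ φ p = 0 := by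
  have hpnot : p ∉ Ω := by
    intro h
    rw [frontier, hopen.interior_eq] at hp
    exact hp.2 h
  obtain ⟨f, hf⟩ := geometric_hahn_banach_open_point hconv hopen hpnot
  refine ⟨AffineMap.const ℝ (Fin n → ℝ) (f p) - f.toLinearMap.toAffineMap, fun z hz => ?_, ?_⟩
  · simpa using sub_pos.2 (hf z hz)
  · simp

-- build a positive affine map with prescribed values 1 at x and u at y,
-- interpolating between the constant 1 and a normalized map Φ with Φ x = 1, Φ y = M
lemma interp_14 {n : ℕ} {Ω : Set (Fin n → ℝ)} (x y : Fin n → ℝ) {Φ : (Fin n → ℝ) →ᵃ[ℝ] ℝ}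
    (hΦpos : ∀ z ∈ Ω, 0 < Φ z) {M : ℝ} (hM : 1 < M) (hΦx : Φ x = 1) (hΦy : Φ y = M)
    {u : ℝ} (hu1 : 1 ≤ u) (huM : u ≤ M) :
    ∃ φ : (Fin n → ℝ) →ᵃ[ℝ] ℝ, (∀ z ∈ Ω, 0 < φ z) ∧ φ x = 1 ∧ φ y = u := by
  set l : ℝ := (u - 1) / (M - 1) with hl
  have hl0 : 0 ≤ l := div_nonneg (by linarith) (by linarith)
  have hl1 : l ≤ 1 := by
    rw [hl, div_le_one (by linarith)]; linarith
  refine ⟨l • Φ + (1 - l) • AffineMap.const ℝ (Fin n → ℝ) (1 : ℝ), fun z hz => ?_, ?_, ?_⟩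
  · have hz' := hΦpos z hz
    simp only [AffineMap.coe_add, AffineMap.coe_smul, AffineMap.coe_const,
      Pi.add_apply, Pi.smul_apply, Function.const_apply, smul_eq_mul, mul_one]
    nlinarith [mul_nonneg hl0 hz'.le, mul_nonneg (sub_nonneg.2 hl1) hz'.le]
  · simp [hΦx, smul_eq_mul]
  · simp only [AffineMap.coe_add, AffineMap.coe_smul, AffineMap.coe_const,
      Pi.add_apply, Pi.smul_apply, Function.const_apply, smul_eq_mul, mul_one, hΦy]
    have h1 : l * (M - 1) = u - 1 := by
      rw [hl, div_mul_cancel₀ _ (ne_of_gt (by linarith : (0:ℝ) < M - 1))]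
    nlinarith [h1]

set_option maxHeartbeats 1000000 in
theorem stmt_14 (n : ℕ) (hn : 1 ≤ n) (Ω : Set (Fin n → ℝ))
    (hne : Ω.Nonempty) (hopen : IsOpen Ω) (hbdd : Bornology.IsBounded Ω)
    (hconv : Convex ℝ Ω)
    (x y : Fin n → ℝ) (hx : x ∈ Ω) (hy : y ∈ Ω) (hxy : x ≠ y)
    (s₁ s₂ : ℝ) (hs₁ : s₁ < 0) (hs₂ : 1 < s₂)
    (ha : x + s₁ • (y - x) ∈ frontier Ω) (hb : x + s₂ • (y - x) ∈ frontier Ω) :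
    {r : ℝ | ∃ φ φ' : (Fin n → ℝ) →ᵃ[ℝ] ℝ,
        (∀ z ∈ Ω, 0 < φ z) ∧ (∀ z ∈ Ω, 0 < φ' z) ∧
        r = (φ y * φ' x) / (φ x * φ' y)} =
      Set.Icc (((1 - s₁) * s₂) / ((-s₁) * (s₂ - 1)))⁻¹
        (((1 - s₁) * s₂) / ((-s₁) * (s₂ - 1))) := by
  set M : ℝ := (1 - s₁) / (-s₁) with hMdef
  set N : ℝ := s₂ / (s₂ - 1) with hNdef
  have hs₁0 : 0 < -s₁ := by linarith
  have hs₂0 : 0 < s₂ - 1 := by linarith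
  have hM : 1 < M := by
    rw [hMdef, lt_div_iff₀ hs₁0]; linarith
  have hN : 1 < N := by
    rw [hNdef, lt_div_iff₀ hs₂0]; linarith
  have hDeq : ((1 - s₁) * s₂) / ((-s₁) * (s₂ - 1)) = M * N := by
    rw [hMdef, hNdef, div_mul_div_comm]
  have hD1 : 1 < M * N := by nlinarith
  have hD0 : 0 < M * N := by linarith
  ext r
  simp only [Set.mem_setOf_eq, Set.mem_Icc, hDeq]
  constructor
  · rintro ⟨φ, φ', hφ, hφ', rfl⟩
    have hφx := hφ x hx
    have hφy := hφ y hy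
    have hφ'x := hφ' x hx
    have hφ'y := hφ' y hy
    have haφ : 0 ≤ φ x + s₁ * (φ y - φ x) := by
      rw [← aff_line_14]
      exact nonneg_closure_14 φ hφ (frontier_subset_closure ha)
    have hbφ : 0 ≤ φ x + s₂ * (φ y - φ x) := by
      rw [← aff_line_14]
      exact nonneg_closure_14 φ hφ (frontier_subset_closure hb)
    have haφ' : 0 ≤ φ' x + s₁ * (φ' y - φ' x) := by
      rw [← aff_line_14]
      exact nonneg_closure_14 φ' hφ' (frontier_subset_closure ha)
    have hbφ' : 0 ≤ φ' x + s₂ * (φ' y - φ' x) := by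
      rw [← aff_line_14]
      exact nonneg_closure_14 φ' hφ' (frontier_subset_closure hb)
    -- key linear inequalities
    have k1 : (-s₁) * φ y ≤ (1 - s₁) * φ x := by nlinarith
    have k2 : (s₂ - 1) * φ' x ≤ s₂ * φ' y := by nlinarith
    have k3 : (s₂ - 1) * φ x ≤ s₂ * φ y := by nlinarith
    have k4 : (-s₁) * φ' y ≤ (1 - s₁) * φ' x := by nlinarith
    constructor
    · rw [hMdef, hNdef, div_mul_div_comm, inv_div,
        div_le_div_iff₀ (mul_pos (by linarith) (by linarith : (0:ℝ) < s₂))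
          (mul_pos hφx hφ'y)]
      nlinarith [mul_le_mul k3 k4 (mul_nonneg hs₁0.le hφ'y.le)
        (mul_nonneg (by linarith : (0:ℝ) ≤ s₂) hφy.le)]
    · rw [hMdef, hNdef, div_mul_div_comm,
        div_le_div_iff₀ (mul_pos hφx hφ'y) (mul_pos hs₁0 hs₂0)]
      nlinarith [mul_le_mul k1 k2 (mul_nonneg hs₂0.le hφ'x.le)
        (mul_nonneg (by linarith : (0:ℝ) ≤ 1 - s₁) hφx.le)]
  · rintro ⟨hr1, hr2⟩
    obtain ⟨φa, hφapos, hφa0⟩ := support_at_14 hopen hconv ha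
    obtain ⟨φb, hφbpos, hφb0⟩ := support_at_14 hopen hconv hb
    have hax : 0 < φa x := hφapos x hx
    have hby : 0 < φb y := hφbpos y hy
    have heqa : φa x + s₁ * (φa y - φa x) = 0 := by rw [← aff_line_14]; exact hφa0
    have heqb : φb x + s₂ * (φb y - φb x) = 0 := by rw [← aff_line_14]; exact hφb0
    set Φ : (Fin n → ℝ) →ᵃ[ℝ] ℝ := (φa x)⁻¹ • φa with hΦ
    set Ψ : (Fin n → ℝ) →ᵃ[ℝ] ℝ := (φb y)⁻¹ • φb with hΨ
    have hΦpos : ∀ z ∈ Ω, 0 < Φ z := fun z hz => by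
      rw [hΦ]
      simpa [smul_eq_mul] using mul_pos (inv_pos.2 hax) (hφapos z hz)
    have hΨpos : ∀ z ∈ Ω, 0 < Ψ z := fun z hz => by
      rw [hΨ]
      simpa [smul_eq_mul] using mul_pos (inv_pos.2 hby) (hφbpos z hz)
    have hΦx : Φ x = 1 := by
      rw [hΦ]
      simp [smul_eq_mul, inv_mul_cancel₀ (ne_of_gt hax)]
    have hΨy : Ψ y = 1 := by
      rw [hΨ]
      simp [smul_eq_mul, inv_mul_cancel₀ (ne_of_gt hby)]
    have hφay : φa y = M * φa x := by
      rw [hMdef, div_mul_eq_mul_div, eq_div_iff (ne_of_gt hs₁0)]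
      linear_combination -heqa
    have hφbx : φb x = N * φb y := by
      rw [hNdef, div_mul_eq_mul_div, eq_div_iff (ne_of_gt hs₂0)]
      linear_combination -heqb
    have hΦy : Φ y = M := by
      rw [hΦ]
      simp only [AffineMap.coe_smul, Pi.smul_apply, smul_eq_mul]
      rw [hφay]
      rw [show (φa x)⁻¹ * (M * φa x) = M * ((φa x)⁻¹ * φa x) by ring,
        inv_mul_cancel₀ (ne_of_gt hax), mul_one]
    have hΨx : Ψ x = N := by
      rw [hΨ]
      simp only [AffineMap.coe_smul, Pi.smul_apply, smul_eq_mul]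
      rw [hφbx]
      rw [show (φb y)⁻¹ * (N * φb y) = N * ((φb y)⁻¹ * φb y) by ring,
        inv_mul_cancel₀ (ne_of_gt hby), mul_one]
    have key : ∀ t : ℝ, 1 ≤ t → t ≤ M * N →
        ∃ φ φ' : (Fin n → ℝ) →ᵃ[ℝ] ℝ, (∀ z ∈ Ω, 0 < φ z) ∧ (∀ z ∈ Ω, 0 < φ' z) ∧
          φ x = 1 ∧ φ' y = 1 ∧ φ y * φ' x = t := by
      intro t ht1 htD
      set u := min t M with hu
      set v := t / u with hv
      have hu0 : 0 < u := lt_min (by linarith) (by linarith)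
      have hu1 : 1 ≤ u := le_min ht1 hM.le
      have huM : u ≤ M := min_le_right _ _
      have hv1 : 1 ≤ v := by
        rw [hv, le_div_iff₀ hu0, one_mul]
        exact min_le_left _ _
      have hvN : v ≤ N := by
        rcases le_total t M with h | h
        · have hut : u = t := min_eq_left h
          rw [hv, hut, div_self (by linarith)]
          linarith
        · have huM' : u = M := min_eq_right h
          rw [hv, huM', div_le_iff₀ (by linarith)]
          linarith [htD]
      have huv : u * v = t := by
        rw [hv, mul_comm, div_mul_cancel₀ _ (ne_of_gt hu0)]
      obtain ⟨φ, hφpos, hφx1, hφyu⟩ := interp_14 x y hΦpos hM hΦx hΦy hu1 huM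
      obtain ⟨φ', hφ'pos, hφ'y1, hφ'xv⟩ := interp_14 y x hΨpos hN hΨy hΨx hv1 hvN
      exact ⟨φ, φ', hφpos, hφ'pos, hφx1, hφ'y1, by rw [hφyu, hφ'xv, huv]⟩
    have hr0 : 0 < r := lt_of_lt_of_le (inv_pos.2 hD0) hr1
    rcases le_total 1 r with h1r | hr1'
    · obtain ⟨φ, φ', hp, hp', hx1, hy1, hval⟩ := key r h1r hr2
      exact ⟨φ, φ', hp, hp', by rw [hx1, hy1, hval, mul_one, div_one]⟩
    · have h1ri : 1 ≤ r⁻¹ := by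
        rw [le_inv_comm₀ one_pos hr0]
        simpa using hr1'
      have hriD : r⁻¹ ≤ M * N := by
        rw [inv_le_comm₀ hr0 hD0]
        exact hr1
      obtain ⟨φ, φ', hp, hp', hx1, hy1, hval⟩ := key r⁻¹ h1ri hriD
      refine ⟨φ', φ, hp', hp, ?_⟩
      rw [hy1, hx1, one_mul,
        show φ' x * φ y = r⁻¹ by rw [mul_comm]; exact hval, one_div, inv_inv]
end

section
/- Let k be a field of characteristic different from 2 and let Q(x,y,z) = xz − y² on k³. A matrix M ∈ M₃(k) satisfies det M = 1, Q(Mv) = Q(v) for all v ∈ k³, and M·(1,0,0)ᵀ = (1,0,0)ᵀ, if and only if there exists w ∈ k such that M = [[1, 2w, w²], [0, 1, w], [0, 0, 1]]. (This identifies the stabilizer in SO(Q) of the isotropic vector v₀ = (1,0,0) with the unipotent subgroup N⁺.) -/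
open Matrix

theorem stmt_15 {k : Type*} [Field k] (hchar : ringChar k ≠ 2)
    (M : Matrix (Fin 3) (Fin 3) k) :
    (M.det = 1 ∧
      (∀ v : Fin 3 → k,
        M.mulVec v 0 * M.mulVec v 2 - M.mulVec v 1 ^ 2 = v 0 * v 2 - v 1 ^ 2) ∧
      M.mulVec ![1, 0, 0] = ![1, 0, 0]) ↔
    ∃ w : k, M = !![1, 2 * w, w ^ 2; 0, 1, w; 0, 0, 1] := by
  constructor
  · rintro ⟨hdet, hQ, hfix⟩
    have e00 := congr_fun hfix 0
    have e10 := congr_fun hfix 1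
    have e20 := congr_fun hfix 2
    simp [mulVec, dotProduct, Fin.sum_univ_three] at e00 e10 e20
    have h1 := hQ ![0, 1, 0]
    have h2 := hQ ![0, 0, 1]
    have h3 := hQ ![1, 0, 1]
    have h4 := hQ ![1, 1, 0]
    have h5 := hQ ![0, 1, 1]
    simp [mulVec, dotProduct, Fin.sum_univ_three, e00, e10, e20] at h1 h2 h3 h4 h5
    rw [Matrix.det_fin_three] at hdet
    have hM22 : M 2 2 = 1 := by linear_combination h3 - h2
    have hM21 : M 2 1 = 0 := by linear_combination h4 - h1
    have hM11 : M 1 1 = 1 := by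
      simp [e00, e10, e20, hM21, hM22] at hdet
      linear_combination hdet
    have hM02 : M 0 2 = M 1 2 ^ 2 := by
      rw [hM22] at h2; linear_combination h2
    have hM01 : M 0 1 = 2 * M 1 2 := by
      rw [hM21, hM22, hM11, hM02] at h5; linear_combination h5
    refine ⟨M 1 2, ?_⟩
    ext i j
    fin_cases i <;> fin_cases j <;>
      simp [e00, e10, e20, hM01, hM02, hM11, hM21, hM22, Matrix.vecHead, Matrix.vecTail]
  · rintro ⟨w, rfl⟩
    refine ⟨by simp [Matrix.det_fin_three, Matrix.vecHead, Matrix.vecTail, Function.comp], fun v => ?_, ?_⟩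
    · simp [mulVec, dotProduct, Fin.sum_univ_three, Matrix.vecHead, Matrix.vecTail]
      ring
    · ext i
      fin_cases i <;> simp [mulVec, dotProduct, Fin.sum_univ_three, Matrix.vecHead, Matrix.vecTail]
end

section
/- Let p be a prime and let Sq = {x² : x ∈ ℚ_p, x ≠ 0} denote the set of nonzero squares of ℚ_p. Then { (u,v,w) ∈ ℚ_p³ : for all a, b, c ∈ Sq, u·a + v·b + w·c ∈ Sq } = { (t,0,0) : t ∈ Sq } ∪ { (0,t,0) : t ∈ Sq } ∪ { (0,0,t) : t ∈ Sq }. (This computes the dual of the triangle T_H, the set of points of the H-sphere with all three coordinates in H = squares: the dual consists exactly of the three coordinate forms.) -/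
/-!
A nonzero coordinate `t` of a form in the dual is a square: testing on `a = p⁻²ⁿ` gives
`t a + d = t a (1 + (d / t) p²ⁿ)`, and for large `n` the last factor is a square by Hensel's
lemma. If two coordinates were nonzero, rescaling the test vectors would make the nonzero squares
closed under `x ↦ x + 2`, so every natural number `≥ 3` would be a square, among them `p³`, whose
valuation is odd.
-/

open Filter Topology

section Field

variable {K : Type*} [Field K]

def IsNonzeroSq (x : K) : Prop := ∃ r : K, r ≠ 0 ∧ x = r ^ 2

theorem isNonzeroSq_one : IsNonzeroSq (1 : K) := ⟨1, one_ne_zero, (one_pow 2).symm⟩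

theorem IsNonzeroSq.ne_zero {x : K} (hx : IsNonzeroSq x) : x ≠ 0 := by
  obtain ⟨r, hr, rfl⟩ := hx
  exact pow_ne_zero 2 hr

theorem IsNonzeroSq.mul {x y : K} (hx : IsNonzeroSq x) (hy : IsNonzeroSq y) :
    IsNonzeroSq (x * y) := by
  obtain ⟨r, hr, rfl⟩ := hx
  obtain ⟨s, hs, rfl⟩ := hy
  exact ⟨r * s, mul_ne_zero hr hs, (mul_pow r s 2).symm⟩

theorem IsNonzeroSq.div {x y : K} (hx : IsNonzeroSq x) (hy : IsNonzeroSq y) :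
    IsNonzeroSq (x / y) := by
  obtain ⟨r, hr, rfl⟩ := hx
  obtain ⟨s, hs, rfl⟩ := hy
  exact ⟨r / s, div_ne_zero hr hs, (div_pow r s 2).symm⟩

theorem isNonzeroSq_natCast_add_three (h2 : (2 : K) ≠ 0)
    (h : ∀ x : K, IsNonzeroSq x → IsNonzeroSq (x + 2)) :
    ∀ n : ℕ, IsNonzeroSq ((n + 3 : ℕ) : K)
  | 0 => by convert h 1 isNonzeroSq_one using 1; norm_num
  | 1 => ⟨2, h2, by norm_num⟩
  | n + 2 => by
    convert h _ (isNonzeroSq_natCast_add_three h2 h n) using 1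
    push_cast
    ring

/-- `(U, V, W)` lies in the dual of the triangle `T_H` for `H` the nonzero squares. -/
def IsSqValued (U V W : K) : Prop :=
  ∀ a b c : K, IsNonzeroSq a → IsNonzeroSq b → IsNonzeroSq c → IsNonzeroSq (U * a + V * b + W * c)

theorem IsSqValued.rotate {U V W : K} (h : IsSqValued U V W) : IsSqValued V W U :=
  fun a b c ha hb hc => by convert h c a b hc ha hb using 1; ring

theorem IsSqValued.swap {U V W : K} (h : IsSqValued U V W) : IsSqValued V U W :=
  fun a b c ha hb hc => by convert h b a c hb ha hc using 1; ring

theorem isSqValued_fst {t : K} (ht : IsNonzeroSq t) : IsSqValued t 0 0 :=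
  fun a _ _ ha _ _ => by simpa using ht.mul ha

end Field

section Padic

variable {p : ℕ} [Fact p.Prime]

theorem PadicInt.exists_sq_eq_one_add {z : ℤ_[p]} (hz : ‖z‖ < ‖(2 : ℤ_[p])‖ ^ 2) :
    ∃ y : ℤ_[p], y ^ 2 = 1 + z := by
  have hF : ‖(Polynomial.X ^ 2 - Polynomial.C (1 + z)).aeval (1 : ℤ_[p])‖ <
      ‖(Polynomial.X ^ 2 - Polynomial.C (1 + z)).derivative.aeval (1 : ℤ_[p])‖ ^ 2 := by
    simpa [Polynomial.derivative_pow] using hz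
  obtain ⟨y, hy, -⟩ := hensels_lemma hF
  exact ⟨y, by simpa [sub_eq_zero] using hy⟩

theorem Padic.isNonzeroSq_one_add {x : ℚ_[p]} (hx : ‖x‖ < ‖(2 : ℚ_[p])‖ ^ 2) :
    IsNonzeroSq (1 + x) := by
  have hx1 : ‖x‖ < 1 :=
    hx.trans_le (pow_le_one₀ (norm_nonneg _) (by exact_mod_cast PadicInt.norm_le_one 2))
  obtain ⟨y, hy⟩ := PadicInt.exists_sq_eq_one_add (z := ⟨x, hx1.le⟩) (by exact_mod_cast hx)
  have hy' : (y : ℚ_[p]) ^ 2 = 1 + x := by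
    exact_mod_cast congrArg ((↑) : ℤ_[p] → ℚ_[p]) hy
  refine ⟨y, fun hy0 => ?_, hy'.symm⟩
  rw [hy0, zero_pow two_ne_zero, eq_comm, add_eq_zero_iff_eq_neg'] at hy'
  simp [hy'] at hx1

theorem Padic.isNonzeroSq_of_forall_mul_add {t d : ℚ_[p]} (ht : t ≠ 0)
    (h : ∀ a, IsNonzeroSq a → IsNonzeroSq (t * a + d)) : IsNonzeroSq t := by
  have hsmall : Tendsto (fun n => d / t * ((p : ℚ_[p]) ^ n) ^ 2) atTop (𝓝 0) := by
    simpa using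
      ((tendsto_pow_atTop_nhds_zero_of_norm_lt_one norm_p_lt_one).pow 2).const_mul (d / t)
  have h2 : ‖(0 : ℚ_[p])‖ < ‖(2 : ℚ_[p])‖ ^ 2 := by
    rw [norm_zero]
    exact pow_pos (norm_pos_iff.2 two_ne_zero) 2
  obtain ⟨n, hn⟩ := (hsmall.norm.eventually (gt_mem_nhds h2)).exists
  set r := (p : ℚ_[p]) ^ n
  have hr : r ≠ 0 := pow_ne_zero n (Nat.cast_ne_zero.2 (Fact.out : p.Prime).ne_zero)
  have hε := isNonzeroSq_one_add hn
  have hshift := h (r⁻¹ ^ 2) ⟨r⁻¹, inv_ne_zero hr, rfl⟩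
  have : t = (t * r⁻¹ ^ 2 + d) * r ^ 2 / (1 + d / t * r ^ 2) := by
    rw [eq_div_iff hε.ne_zero]
    field_simp
  rw [this]
  exact (hshift.mul ⟨r, hr, rfl⟩).div hε

theorem IsNonzeroSq.even_valuation {x : ℚ_[p]} (hx : IsNonzeroSq x) : Even x.valuation := by
  obtain ⟨r, -, rfl⟩ := hx
  exact ⟨r.valuation, by simp [two_mul]⟩

variable {U V W : ℚ_[p]}

theorem IsSqValued.isNonzeroSq_fst (h : IsSqValued U V W) (hU : U ≠ 0) : IsNonzeroSq U :=
  Padic.isNonzeroSq_of_forall_mul_add (d := V + W) hU fun a ha => by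
    convert h a 1 1 ha isNonzeroSq_one isNonzeroSq_one using 1
    ring

theorem IsSqValued.add_two_of_ne_zero (h : IsSqValued U V W) (hU : U ≠ 0) (hV : V ≠ 0) :
    ∀ x : ℚ_[p], IsNonzeroSq x → IsNonzeroSq (x + 2) := by
  have sU := h.isNonzeroSq_fst hU
  have sV := h.swap.isNonzeroSq_fst hV
  have hadd (c : ℚ_[p]) (hc : IsNonzeroSq c) (x : ℚ_[p]) (hx : IsNonzeroSq x) :
      IsNonzeroSq (x + 1 + W * c) := by
    convert h (x / U) (1 / V) c (hx.div sU) (isNonzeroSq_one.div sV) hc using 1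
    field_simp
  rcases eq_or_ne W 0 with rfl | hW
  · intro x hx
    convert hadd 1 isNonzeroSq_one _ (hadd 1 isNonzeroSq_one x hx) using 1
    ring
  · intro x hx
    convert hadd _ (isNonzeroSq_one.div (h.rotate.rotate.isNonzeroSq_fst hW)) x hx using 1
    field_simp
    ring

theorem IsSqValued.eq_zero_of_ne_zero (h : IsSqValued U V W) (hU : U ≠ 0) : V = 0 := by
  by_contra hV
  have hp3 : 3 ≤ p ^ 3 :=
    le_trans (by norm_num) (Nat.pow_le_pow_left (Fact.out : p.Prime).two_le 3)
  have h3 := isNonzeroSq_natCast_add_three (K := ℚ_[p]) two_ne_zero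
    (h.add_two_of_ne_zero hU hV) (p ^ 3 - 3)
  rw [Nat.sub_add_cancel hp3, Nat.cast_pow] at h3
  simpa [Int.even_iff] using h3.even_valuation

end Padic

theorem stmt_16 (p : ℕ) [Fact p.Prime] :
    {u : ℚ_[p] × ℚ_[p] × ℚ_[p] |
        ∀ a b c : ℚ_[p], (∃ r : ℚ_[p], r ≠ 0 ∧ a = r ^ 2) →
          (∃ r : ℚ_[p], r ≠ 0 ∧ b = r ^ 2) → (∃ r : ℚ_[p], r ≠ 0 ∧ c = r ^ 2) →
          ∃ r : ℚ_[p], r ≠ 0 ∧ u.1 * a + u.2.1 * b + u.2.2 * c = r ^ 2} =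
      {u : ℚ_[p] × ℚ_[p] × ℚ_[p] | ∃ t : ℚ_[p], (∃ r : ℚ_[p], r ≠ 0 ∧ t = r ^ 2) ∧
        (u = (t, 0, 0) ∨ u = (0, t, 0) ∨ u = (0, 0, t))} := by
  ext ⟨U, V, W⟩
  simp only [Set.mem_ofPred_eq, Prod.mk.injEq]
  change IsSqValued U V W ↔ ∃ t, IsNonzeroSq t ∧
    (U = t ∧ V = 0 ∧ W = 0 ∨ U = 0 ∧ V = t ∧ W = 0 ∨ U = 0 ∧ V = 0 ∧ W = t)
  constructor
  · intro h
    rcases eq_or_ne U 0 with rfl | hU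
    · rcases eq_or_ne V 0 with rfl | hV
      · have hW : W ≠ 0 := by
          simpa using (h 1 1 1 isNonzeroSq_one isNonzeroSq_one isNonzeroSq_one).ne_zero
        exact ⟨W, h.rotate.rotate.isNonzeroSq_fst hW, by simp⟩
      · exact ⟨V, h.swap.isNonzeroSq_fst hV, by
          simp [h.rotate.eq_zero_of_ne_zero hV]⟩
    · exact ⟨U, h.isNonzeroSq_fst hU, by
        simp [h.eq_zero_of_ne_zero hU, h.rotate.rotate.swap.eq_zero_of_ne_zero hU]⟩
  · rintro ⟨t, ht, ⟨rfl, rfl, rfl⟩ | ⟨rfl, rfl, rfl⟩ | ⟨rfl, rfl, rfl⟩⟩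
    · exact isSqValued_fst ht
    · exact (isSqValued_fst ht).rotate.rotate
    · exact (isSqValued_fst ht).rotate
end
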